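/- arXiv:2412.09710 — 4 statements merged into one kernel-verified Lean document; each statement's English description precedes it below -/
import Mathlib

section
/- Let q > r ≥ 1 and let n be a prime. Let M be a (q−r)×q Cauchy matrix over F_n (requiring n ≥ 2q−r so that the construction x_i = i for i ∈ [q−r], y_j = q−r+j for j ∈ [q] gives valid parameters). Identify each vector v ∈ F_n^q with the copy of K_q^r in the complete q-partite r-graph K_{q*n}^r whose vertex in part j is (j, v_j). Then for each a ∈ F_n^{q−r}, the set of solutions v of Mv = a corresponds to a K_q^r-decomposition of K_{q*n}^r: every edge of K_{q*n}^r (i.e., every r-set with at most one vertex per part) lies in exactly one clique from this set. -/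
open Polynomial Finset in
lemma cauchy_ker {F : Type*} [Field F] {m : ℕ} {x y : Fin m → F}
    (hx : Function.Injective x) (hy : Function.Injective y)
    (hxy : ∀ i j, x i ≠ y j) (w : Fin m → F)
    (hw : (Matrix.of fun i j => (x i - y j)⁻¹).mulVec w = 0) : w = 0 := by
  classical
  rcases Nat.eq_zero_or_pos m with hm | hm
  · subst hm; funext i; exact absurd i.2 (by omega)
  set Q : F[X] := ∑ j : Fin m, C (w j) * ∏ k ∈ univ.erase j, (X - C (y k)) with hQdef
  have heval : ∀ i, Q.eval (x i) = 0 := by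
    intro i
    have h0 : ∀ j, x i - y j ≠ 0 := fun j => sub_ne_zero.mpr (hxy i j)
    have : Q.eval (x i) = (∏ k, (x i - y k)) * ((Matrix.of fun i j => (x i - y j)⁻¹).mulVec w i) := by
      simp only [Matrix.mulVec, dotProduct, Matrix.of_apply, hQdef, eval_finset_sum,
        eval_mul, eval_C, eval_prod, eval_sub, eval_X, Finset.mul_sum]
      refine Finset.sum_congr rfl fun j _ => ?_
      rw [← Finset.mul_prod_erase (Finset.univ) (fun k => x i - y k) (Finset.mem_univ j)]
      field_simp [h0 j]
    rw [this, hw]; simp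
  have hdeg : Q.natDegree < m := by
    have : Q.natDegree ≤ m - 1 := by
      apply Polynomial.natDegree_sum_le_of_forall_le
      intro j _
      refine le_trans (Polynomial.natDegree_C_mul_le _ _) ?_
      refine le_trans (Polynomial.natDegree_prod_le _ _) ?_
      have h1 : ∀ k ∈ univ.erase j, (X - C (y k)).natDegree ≤ 1 :=
        fun k _ => by simp [Polynomial.natDegree_X_sub_C]
      refine le_trans (Finset.sum_le_sum h1) ?_
      simp [Finset.card_erase_of_mem]
    omega
  have hQ0 : Q = 0 := by
    apply Polynomial.eq_zero_of_natDegree_lt_card_of_eval_eq_zero Q hx heval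
    simpa using hdeg
  funext j
  have := congrArg (Polynomial.eval (y j)) hQ0
  simp only [hQdef, eval_finset_sum, eval_mul, eval_C, eval_prod, eval_sub, eval_X,
    eval_zero] at this
  rw [Finset.sum_eq_single j] at this
  · have hne : (∏ k ∈ univ.erase j, (y j - y k)) ≠ 0 := by
      refine Finset.prod_ne_zero_iff.mpr fun k hk => ?_
      exact sub_ne_zero.mpr fun h => (Finset.mem_erase.mp hk).1 (hy h.symm)
    have := mul_eq_zero.mp this
    simpa [hne] using this
  · intro b _ hbj
    apply mul_eq_zero_of_right
    exact Finset.prod_eq_zero (Finset.mem_erase.mpr ⟨fun h => hbj h.symm, Finset.mem_univ j⟩) (by simp)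
  · simp

lemma existsUnique_mulVec {F : Type*} [Field F] {m : ℕ}
    (N : Matrix (Fin m) (Fin m) F) (h : ∀ w, N.mulVec w = 0 → w = 0)
    (b : Fin m → F) : ∃! w, N.mulVec w = b := by
  have hinj : Function.Injective N.mulVecLin := by
    rw [← LinearMap.ker_eq_bot, LinearMap.ker_eq_bot']
    intro w hw
    exact h w (by simpa using hw)
  have hbij : Function.Bijective N.mulVecLin :=
    ⟨hinj, LinearMap.injective_iff_surjective.mp hinj⟩
  simpa using hbij.existsUnique b


/-- Let `q > r ≥ 1`, `n ≥ 2q - r` a prime, and `M` the `(q-r) × q` Cauchy matrix over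
`F_n = ZMod n` with parameters `x i = i` for `i ∈ [q-r]` and `y j = q - r + j` for `j ∈ [q]`
(here `M i j = (x i - y j)⁻¹` with the `Fin`-indices shifted by one to match `[q-r]`, `[q]`).
Identifying each `v : Fin q → ZMod n` with the transversal clique
`{(j, v j) : j ∈ Fin q}` of the complete `q`-partite `r`-graph `K_{q*n}^r`, for every
`a ∈ F_n^(q-r)` the solutions of `M v = a` form a `K_q^r`-decomposition of `K_{q*n}^r`:
every edge (i.e. every `r`-set of vertices with at most one vertex per part) lies in
exactly one clique of the family. -/
theorem cauchy_solutions_give_decomposition {q r n : ℕ}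
    (hr : 1 ≤ r) (hq : r < q) (hn : n.Prime) (hnq : 2 * q - r ≤ n)
    (M : Matrix (Fin (q - r)) (Fin q) (ZMod n))
    (hM : ∀ i j, M i j =
      ((((i : ℕ) + 1 : ℕ) : ZMod n) - (((q - r + (j : ℕ) + 1 : ℕ)) : ZMod n))⁻¹)
    (a : Fin (q - r) → ZMod n)
    (e : Finset (Fin q × ZMod n)) (he : e.card = r)
    (hpart : ∀ u ∈ e, ∀ w ∈ e, u.1 = w.1 → u = w) :
    ∃! v : Fin q → ZMod n, M.mulVec v = a ∧ ∀ p ∈ e, v p.1 = p.2 := by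
  classical
  haveI : Fact n.Prime := ⟨hn⟩
  have hn0 : 0 < n := hn.pos
  have hqn : q < n := by omega
  -- injectivity of the natural casts on [1, n]
  have hcast : ∀ a b : ℕ, 1 ≤ a → a ≤ n → 1 ≤ b → b ≤ n → ((a : ZMod n) = (b : ZMod n)) → a = b := by
    intro a b ha1 han hb1 hbn hab
    have hmod : a % n = b % n := by
      have := congrArg ZMod.val hab
      simpa [ZMod.val_natCast] using this
    rcases Nat.lt_or_ge a n with ha | ha
    · rcases Nat.lt_or_ge b n with hb | hb
      · rwa [Nat.mod_eq_of_lt ha, Nat.mod_eq_of_lt hb] at hmod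
      · have hb' : b = n := le_antisymm hbn hb
        rw [Nat.mod_eq_of_lt ha, hb', Nat.mod_self] at hmod
        omega
    · have ha' : a = n := le_antisymm han ha
      rw [ha', Nat.mod_self] at hmod
      rcases Nat.lt_or_ge b n with hb | hb
      · rw [Nat.mod_eq_of_lt hb] at hmod
        omega
      · omega
  set S : Finset (Fin q) := e.image Prod.fst with hSdef
  have hS : S.card = r := by
    have hinj : Set.InjOn Prod.fst ↑e := fun u hu w hw h =>
      hpart u (Finset.mem_coe.mp hu) w (Finset.mem_coe.mp hw) h
    rw [hSdef, Finset.card_image_of_injOn hinj, he]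
  have hSc : (Sᶜ).card = q - r := by
    rw [Finset.card_compl, hS]
    simp
  let ε : {x // x ∈ Sᶜ} ≃ Fin (q - r) := (Sᶜ).equivFinOfCardEq hSc
  set x : Fin (q - r) → ZMod n := fun i => (((i : ℕ) + 1 : ℕ) : ZMod n) with hxdef
  set y : Fin (q - r) → ZMod n :=
    fun j => ((q - r + (((ε.symm j : {x // x ∈ Sᶜ}) : Fin q) : ℕ) + 1 : ℕ) : ZMod n) with hydef
  have hx : Function.Injective x := by
    intro i i' h
    have := hcast ((i : ℕ) + 1) ((i' : ℕ) + 1) (by omega) (by omega) (by omega) (by omega) h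
    exact Fin.ext (by omega)
  have hy : Function.Injective y := by
    intro j j' h
    have h2 := hcast (q - r + (((ε.symm j : {x // x ∈ Sᶜ}) : Fin q) : ℕ) + 1)
      (q - r + (((ε.symm j' : {x // x ∈ Sᶜ}) : Fin q) : ℕ) + 1)
      (by omega) (by have := ((ε.symm j : {x // x ∈ Sᶜ}) : Fin q).2; omega)
      (by omega) (by have := ((ε.symm j' : {x // x ∈ Sᶜ}) : Fin q).2; omega) h
    have : (ε.symm j) = (ε.symm j') := Subtype.ext (Fin.ext (by omega))
    exact ε.symm.injective this
  have hxy : ∀ i j, x i ≠ y j := by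
    intro i j h
    have h2 := hcast ((i : ℕ) + 1) (q - r + (((ε.symm j : {x // x ∈ Sᶜ}) : Fin q) : ℕ) + 1)
      (by omega) (by omega) (by omega)
      (by have := ((ε.symm j : {x // x ∈ Sᶜ}) : Fin q).2; omega) h
    have := i.2
    omega
  set N : Matrix (Fin (q - r)) (Fin (q - r)) (ZMod n) :=
    Matrix.of (fun i j => (x i - y j)⁻¹) with hNdef
  have hNM : ∀ i j, N i j = M i ((ε.symm j : {x // x ∈ Sᶜ}) : Fin q) := by
    intro i j
    rw [hNdef, hM]
    rfl
  -- the value function determined by the edge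
  set f : Fin q → ZMod n := fun j => ∑ p ∈ e.filter (fun p => p.1 = j), p.2 with hfdef
  have hf : ∀ p ∈ e, f p.1 = p.2 := by
    intro p hp
    have hfil : e.filter (fun p' => p'.1 = p.1) = {p} := by
      ext p'
      simp only [Finset.mem_filter, Finset.mem_singleton]
      constructor
      · rintro ⟨hp', h⟩; exact hpart p' hp' p hp h
      · rintro rfl; exact ⟨hp, rfl⟩
    rw [hfdef]
    simp [hfil]
  have hvS : ∀ v : Fin q → ZMod n, (∀ p ∈ e, v p.1 = p.2) → ∀ j ∈ S, v j = f j := by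
    intro v hv j hj
    rw [hSdef] at hj
    obtain ⟨p, hp, hpj⟩ := Finset.mem_image.mp hj
    subst hpj
    rw [hv p hp, hf p hp]
  -- splitting of mulVec
  have hsplit : ∀ (v : Fin q → ZMod n) (i : Fin (q - r)),
      M.mulVec v i = (∑ j ∈ S, M i j * v j)
        + N.mulVec (fun j' => v ((ε.symm j' : {x // x ∈ Sᶜ}) : Fin q)) i := by
    intro v i
    have h1 : M.mulVec v i = ∑ j, M i j * v j := rfl
    have h2 : N.mulVec (fun j' => v ((ε.symm j' : {x // x ∈ Sᶜ}) : Fin q)) i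
        = ∑ j' : Fin (q - r), M i ((ε.symm j' : {x // x ∈ Sᶜ}) : Fin q)
            * v ((ε.symm j' : {x // x ∈ Sᶜ}) : Fin q) := by
      have hr2 : N.mulVec (fun j' => v ((ε.symm j' : {x // x ∈ Sᶜ}) : Fin q)) i
          = ∑ j' : Fin (q - r), N i j' * v ((ε.symm j' : {x // x ∈ Sᶜ}) : Fin q) := rfl
      rw [hr2]
      refine Finset.sum_congr rfl fun j' _ => ?_
      rw [hNM]
    have h3 : ∑ j' : Fin (q - r), M i ((ε.symm j' : {x // x ∈ Sᶜ}) : Fin q)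
            * v ((ε.symm j' : {x // x ∈ Sᶜ}) : Fin q)
        = ∑ j ∈ Sᶜ, M i j * v j := by
      rw [← Finset.sum_coe_sort (Sᶜ) (fun j => M i j * v j)]
      exact Equiv.sum_comp ε.symm (fun jel => M i (jel : Fin q) * v (jel : Fin q))
    rw [h1, h2, h3, Finset.sum_add_sum_compl]
  set d : Fin (q - r) → ZMod n := fun i => a i - ∑ j ∈ S, M i j * f j with hddef
  obtain ⟨w, hw, hwuniq⟩ := existsUnique_mulVec N (cauchy_ker hx hy hxy) d
  set v : Fin q → ZMod n :=
    fun j => if h : j ∈ S then f j else w (ε ⟨j, Finset.mem_compl.mpr h⟩) with hvdef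
  have hvcompl : ∀ j' : Fin (q - r), v ((ε.symm j' : {x // x ∈ Sᶜ}) : Fin q) = w j' := by
    intro j'
    have hj : ((ε.symm j' : {x // x ∈ Sᶜ}) : Fin q) ∉ S := Finset.mem_compl.mp (ε.symm j').2
    rw [hvdef]
    simp only [dif_neg hj, Subtype.coe_eta, Equiv.apply_symm_apply]
  have hvedge : ∀ p ∈ e, v p.1 = p.2 := by
    intro p hp
    have hpS : p.1 ∈ S := by
      rw [hSdef]
      exact Finset.mem_image_of_mem _ hp
    rw [hvdef]
    simp only [dif_pos hpS]
    exact hf p hp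
  have hvsol : M.mulVec v = a := by
    funext i
    rw [hsplit v i]
    have hfun : (fun j' => v ((ε.symm j' : {x // x ∈ Sᶜ}) : Fin q)) = w := funext hvcompl
    rw [hfun, hw]
    have hsum : ∑ j ∈ S, M i j * v j = ∑ j ∈ S, M i j * f j :=
      Finset.sum_congr rfl fun j hj => by rw [hvS v hvedge j hj]
    rw [hsum]
    simp only [hddef]
    ring
  refine ⟨v, ⟨hvsol, hvedge⟩, ?_⟩
  rintro v' ⟨hv'sol, hv'edge⟩
  have hw' : N.mulVec (fun j' => v' ((ε.symm j' : {x // x ∈ Sᶜ}) : Fin q)) = d := by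
    funext i
    have := hsplit v' i
    rw [hv'sol] at this
    have hsum : ∑ j ∈ S, M i j * v' j = ∑ j ∈ S, M i j * f j :=
      Finset.sum_congr rfl fun j hj => by rw [hvS v' hv'edge j hj]
    rw [hsum] at this
    simp only [hddef]
    linear_combination -this
  have hww : (fun j' => v' ((ε.symm j' : {x // x ∈ Sᶜ}) : Fin q)) = w := hwuniq _ hw'
  funext j
  by_cases h : j ∈ S
  · rw [hvS v' hv'edge j h, hvdef]
    simp only [dif_pos h]
  · have hj : j ∈ Sᶜ := Finset.mem_compl.mpr h
    have h1 : v' j = w (ε ⟨j, hj⟩) := by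
      have h2 := congrFun hww (ε ⟨j, hj⟩)
      simpa using h2
    rw [h1, hvdef]
    simp only [dif_neg h]
end

section
/- Let q > r ≥ 1 and n ≥ 2q−r prime, and let M be a (q−r)×q Cauchy matrix over F_n. Then the family of K_q^r-decompositions (Q_a : a ∈ F_n^{q−r}) of K_{q*n}^r, where Q_a consists of the cliques corresponding to solutions of Mv = a, partitions the set of all transversal q-cliques of K_{q*n}^r: every transversal q-clique lies in exactly one decomposition Q_a. -/
open Polynomial Finset

/-- Kernel of a square Cauchy-type matrix is trivial: if `x`, `y` are injective tuples with
`x i ≠ y j` for all `i, j`, and `c` satisfies `∑ j, (x i - y j)⁻¹ * c j = 0` for all `i`,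
then `c = 0`.  Proved via the polynomial `f = ∑ j c j ∏_{k ≠ j} (X - y k)`. -/
lemma cauchy_kernel {F : Type*} [Field F] {m : ℕ}
    (x y : Fin m → F) (hx : Function.Injective x) (hy : Function.Injective y)
    (hxy : ∀ i j, x i ≠ y j)
    (c : Fin m → F) (hc : ∀ i, ∑ j, (x i - y j)⁻¹ * c j = 0) :
    c = 0 := by
  classical
  rcases Nat.eq_zero_or_pos m with hm | hm
  · funext j; exact absurd j.2 (by omega)
  set f : F[X] := ∑ j, C (c j) * ∏ k ∈ Finset.univ.erase j, (X - C (y k)) with hf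
  have hdeg : f.degree < (m : ℕ) := by
    apply lt_of_le_of_lt (Polynomial.degree_sum_le _ _)
    rw [Finset.sup_lt_iff (by exact_mod_cast WithBot.bot_lt_coe m)]
    intro j hj
    calc (C (c j) * ∏ k ∈ Finset.univ.erase j, (X - C (y k))).degree
        ≤ (C (c j)).degree + (∏ k ∈ Finset.univ.erase j, (X - C (y k))).degree :=
          Polynomial.degree_mul_le _ _
      _ ≤ 0 + (m - 1 : ℕ) := by
          apply add_le_add (Polynomial.degree_C_le)
          apply le_trans (Polynomial.degree_prod_le _ _)
          simp [Polynomial.degree_X_sub_C, Finset.card_erase_of_mem]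
      _ < (m : ℕ) := by
          rw [zero_add]
          exact_mod_cast Nat.sub_lt hm one_pos
  have hzero : f = 0 := by
    apply Polynomial.eq_zero_of_degree_lt_of_eval_index_eq_zero
      (Finset.univ : Finset (Fin m)) (hx.injOn) (by simpa using hdeg)
    intro i _
    have key : f.eval (x i) = (∑ j, (x i - y j)⁻¹ * c j) * ∏ k, (x i - y k) := by
      rw [hf]
      simp only [Polynomial.eval_finset_sum, Polynomial.eval_mul, Polynomial.eval_C,
        Polynomial.eval_prod, Polynomial.eval_sub, Polynomial.eval_X]
      rw [Finset.sum_mul]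
      apply Finset.sum_congr rfl
      intro j _
      have h0 : x i - y j ≠ 0 := sub_ne_zero.mpr (hxy i j)
      rw [← Finset.mul_prod_erase Finset.univ _ (Finset.mem_univ j)]
      field_simp
    rw [key, hc i, zero_mul]
  funext j
  have h2 : f.eval (y j) = 0 := by rw [hzero]; simp
  rw [hf] at h2
  simp only [Polynomial.eval_finset_sum, Polynomial.eval_mul, Polynomial.eval_C,
    Polynomial.eval_prod, Polynomial.eval_sub, Polynomial.eval_X] at h2
  rw [Finset.sum_eq_single_of_mem j (Finset.mem_univ j)] at h2
  · have hprod : ∏ k ∈ Finset.univ.erase j, (y j - y k) ≠ 0 := by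
      rw [Finset.prod_ne_zero_iff]
      intro k hk
      exact sub_ne_zero.mpr fun h => (Finset.mem_erase.mp hk).1 (hy h).symm
    simpa [Pi.zero_apply] using (mul_eq_zero.mp h2).resolve_right hprod
  · intro j' _ hne
    apply mul_eq_zero_of_right
    exact Finset.prod_eq_zero (Finset.mem_erase.mpr ⟨fun h => hne h.symm, Finset.mem_univ j⟩)
      (by simp)

/-- A square matrix over a field with trivial kernel gives unique solutions. -/
lemma exists_unique_solution {F : Type*} [Field F] {m : ℕ} (N : Matrix (Fin m) (Fin m) F)
    (hinj : ∀ c, N.mulVec c = 0 → c = 0) (t : Fin m → F) :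
    ∃! u, N.mulVec u = t := by
  have hinj' : Function.Injective N.mulVecLin := by
    rw [← LinearMap.ker_eq_bot, LinearMap.ker_eq_bot']
    intro c hc
    exact hinj c hc
  obtain ⟨u, hu⟩ := LinearMap.injective_iff_surjective.mp hinj' t
  rw [Matrix.mulVecLin_apply] at hu
  exact ⟨u, hu, fun u' hu' => hinj' (by simp only [Matrix.mulVecLin_apply]; rw [hu, hu'])⟩

/-- Let `q > r ≥ 1`, `n ≥ 2q - r` a prime, and `M` the `(q-r) × q` Cauchy matrix over
`ZMod n` with `x i = i` for `i ∈ [q-r]`, `y j = q - r + j` for `j ∈ [q]`.  The family of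
`K_q^r`-decompositions `(Q_a : a ∈ F_n^(q-r))` of `K_{q*n}^r`, where `Q_a` consists of the
transversal cliques corresponding to the solutions `v` of `M v = a`, partitions the set of
all transversal `q`-cliques of `K_{q*n}^r`:
(i) each `Q_a` is a `K_q^r`-decomposition (every edge, i.e. `r`-set with at most one vertex
per part, lies in exactly one clique of `Q_a`), and
(ii) every transversal `q`-clique (i.e. every `v : Fin q → ZMod n`) lies in exactly one
member of the family, namely in `Q_a` exactly for the unique `a` with `M v = a`. -/
theorem cauchy_decompositions_partition_cliques {q r n : ℕ}
    (hr : 1 ≤ r) (hq : r < q) (hn : n.Prime) (hnq : 2 * q - r ≤ n)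
    (M : Matrix (Fin (q - r)) (Fin q) (ZMod n))
    (hM : ∀ i j, M i j =
      ((((i : ℕ) + 1 : ℕ) : ZMod n) - (((q - r + (j : ℕ) + 1 : ℕ)) : ZMod n))⁻¹) :
    (∀ a : Fin (q - r) → ZMod n, ∀ e : Finset (Fin q × ZMod n), e.card = r →
      (∀ u ∈ e, ∀ w ∈ e, u.1 = w.1 → u = w) →
      ∃! v : Fin q → ZMod n, M.mulVec v = a ∧ ∀ p ∈ e, v p.1 = p.2)
    ∧ ∀ v : Fin q → ZMod n, ∃! a : Fin (q - r) → ZMod n, M.mulVec v = a := by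
  classical
  haveI : Fact n.Prime := ⟨hn⟩
  have hcast : ∀ a b : ℕ, 1 ≤ a → a ≤ n → 1 ≤ b → b ≤ n → ((a : ZMod n) = b) → a = b := by
    intro a b ha han hb hbn h
    have hd : (n : ℤ) ∣ (b : ℤ) - a := ((ZMod.natCast_eq_natCast_iff a b n).mp h).dvd
    rcases lt_trichotomy a b with hlt | heq | hlt
    · have := Int.le_of_dvd (by omega) hd; omega
    · exact heq
    · have := Int.le_of_dvd (by omega) (dvd_sub_comm.mp hd); omega
  have hx : Function.Injective (fun i : Fin (q - r) => (((i : ℕ) + 1 : ℕ) : ZMod n)) := by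
    intro i₁ i₂ h
    have h1 := i₁.2; have h2 := i₂.2
    have := hcast _ _ (by omega) (by omega) (by omega) (by omega) h
    exact Fin.ext (by omega)
  have hy : Function.Injective
      (fun j : Fin q => (((q - r + (j : ℕ) + 1 : ℕ)) : ZMod n)) := by
    intro j₁ j₂ h
    have h1 := j₁.2; have h2 := j₂.2
    have := hcast _ _ (by omega) (by omega) (by omega) (by omega) h
    exact Fin.ext (by omega)
  have hxy : ∀ (i : Fin (q - r)) (j : Fin q),
      (((i : ℕ) + 1 : ℕ) : ZMod n) ≠ (((q - r + (j : ℕ) + 1 : ℕ)) : ZMod n) := by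
    intro i j h
    have h1 := i.2; have h2 := j.2
    have := hcast _ _ (by omega) (by omega) (by omega) (by omega) h
    omega
  constructor
  · intro a e he hedge
    set S : Finset (Fin q) := e.image Prod.fst with hSdef
    have hinjS : Set.InjOn Prod.fst e := fun u hu w hw h => hedge u hu w hw h
    have hScard : S.card = r := by rw [hSdef, Finset.card_image_of_injOn hinjS, he]
    have hSc : Fintype.card {j : Fin q // j ∈ Sᶜ} = q - r := by
      rw [Fintype.card_coe, Finset.card_compl, hScard, Fintype.card_fin]
    set eqv : Fin (q - r) ≃ {j : Fin q // j ∈ Sᶜ} := (Fintype.equivFinOfCardEq hSc).symm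
      with heqvdef
    have heqvS : ∀ k, ((eqv k : {j : Fin q // j ∈ Sᶜ}) : Fin q) ∉ S :=
      fun k => Finset.mem_compl.mp (eqv k).2
    set w : Fin q → ZMod n := fun j => ∑ p ∈ e.filter (fun p => p.1 = j), p.2 with hwdef
    have hw : ∀ p ∈ e, w p.1 = p.2 := by
      intro p hp
      have hfil : e.filter (fun p' => p'.1 = p.1) = {p} := by
        ext p'
        simp only [Finset.mem_filter, Finset.mem_singleton]
        constructor
        · rintro ⟨hp', h1⟩; exact hedge p' hp' p hp h1
        · rintro rfl; exact ⟨hp, rfl⟩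
      rw [hwdef]; simp [hfil]
    set N : Matrix (Fin (q - r)) (Fin (q - r)) (ZMod n) := fun i k => M i (eqv k) with hNdef
    have hNker : ∀ c, N.mulVec c = 0 → c = 0 := by
      intro c hc
      apply cauchy_kernel (fun i : Fin (q - r) => (((i : ℕ) + 1 : ℕ) : ZMod n))
        (fun k => (((q - r + ((eqv k : Fin q) : ℕ) + 1 : ℕ)) : ZMod n)) hx
        (hy.comp (Subtype.coe_injective.comp eqv.injective)) (fun i j => hxy i _) c
      intro i
      have h1 := congrFun hc i
      simpa [Matrix.mulVec, dotProduct, hNdef, hM] using h1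
    set b : Fin (q - r) → ZMod n := fun i => ∑ j ∈ S, M i j * w j with hbdef
    have hcomp : ∀ v : Fin q → ZMod n, (∀ j ∈ S, v j = w j) →
        ∀ i, M.mulVec v i = b i + N.mulVec (fun k => v (eqv k)) i := by
      intro v hv i
      have hsplit : M.mulVec v i = ∑ j ∈ S, M i j * v j + ∑ j ∈ Sᶜ, M i j * v j := by
        rw [Matrix.mulVec, dotProduct, ← Finset.sum_add_sum_compl S]
      rw [hsplit]
      congr 1
      · rw [hbdef]; exact Finset.sum_congr rfl fun j hj => by rw [hv j hj]
      · rw [Matrix.mulVec, dotProduct, ← Finset.sum_coe_sort Sᶜ,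
          ← Equiv.sum_comp eqv (fun t : {j : Fin q // j ∈ Sᶜ} => M i t * v t)]
    obtain ⟨u0, hu0, hu0uniq⟩ := exists_unique_solution N hNker (fun i => a i - b i)
    set v0 : Fin q → ZMod n := fun j =>
      if h : j ∈ S then w j else u0 (eqv.symm ⟨j, Finset.mem_compl.mpr h⟩) with hv0def
    have hv0S : ∀ j ∈ S, v0 j = w j := fun j hj => dif_pos hj
    have hv0c : ∀ k, v0 (eqv k) = u0 k := by
      intro k
      have h1 : ((eqv k : {j : Fin q // j ∈ Sᶜ}) : Fin q) ∉ S := heqvS k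
      rw [hv0def]
      dsimp only
      rw [dif_neg h1]
      have h2 : (⟨((eqv k : {j : Fin q // j ∈ Sᶜ}) : Fin q), Finset.mem_compl.mpr h1⟩ :
          {j : Fin q // j ∈ Sᶜ}) = eqv k := Subtype.ext rfl
      rw [h2, Equiv.symm_apply_apply]
    refine ⟨v0, ⟨?_, ?_⟩, ?_⟩
    · funext i
      rw [hcomp v0 hv0S i]
      have h3 : (fun k => v0 (eqv k)) = u0 := funext hv0c
      rw [h3, hu0]
      ring
    · intro p hp
      rw [hv0S p.1 (Finset.mem_image_of_mem Prod.fst hp)]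
      exact hw p hp
    · rintro v ⟨hva, hve⟩
      have hvS : ∀ j ∈ S, v j = w j := by
        intro j hj
        obtain ⟨p, hp, rfl⟩ := Finset.mem_image.mp hj
        rw [hve p hp]; exact (hw p hp).symm
      have hNu : N.mulVec (fun k => v (eqv k)) = fun i => a i - b i := by
        funext i
        have h3 := congrFun hva i
        rw [hcomp v hvS i] at h3
        exact eq_sub_of_add_eq' h3
      have huu : (fun k => v (eqv k)) = u0 := hu0uniq _ hNu
      funext j
      by_cases hj : j ∈ S
      · rw [hvS j hj, hv0S j hj]
      · have h4 : ((eqv (eqv.symm ⟨j, Finset.mem_compl.mpr hj⟩) :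
            {j : Fin q // j ∈ Sᶜ}) : Fin q) = j := by
          rw [Equiv.apply_symm_apply]
        have h5 : v0 j = u0 (eqv.symm ⟨j, Finset.mem_compl.mpr hj⟩) := dif_neg hj
        have h6 : v j = u0 (eqv.symm ⟨j, Finset.mem_compl.mpr hj⟩) := by
          conv_lhs => rw [← h4]
          exact congrFun huu (eqv.symm ⟨j, Finset.mem_compl.mpr hj⟩)
        rw [h5, h6]
  · exact fun v => ⟨M.mulVec v, rfl, fun a ha => ha.symm⟩
end

section
/- For any integers q > r ≥ 1 and any prime n with n ≥ 2q−r, the complete q-partite r-graph K_{q*n}^r admits two K_q^r-decompositions that share no clique, i.e., decompositions Q_1 and Q_2 with Q_1 ∩ Q_2 = ∅ as sets of cliques. -/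
/-! We identify an `r`-graph with its (finite) edge set: a `Finset (Finset V)` all of whose
members have cardinality `r`.  The vertex set is the union of the edges. -/

/-- The vertex set of an `r`-graph identified with its edge set. -/
def verts {V : Type*} [DecidableEq V] (G : Finset (Finset V)) : Finset V := G.sup id

/-- `G` is an `r`-graph: every edge has `r` vertices. -/
def IsRGraph {V : Type*} (r : ℕ) (G : Finset (Finset V)) : Prop := ∀ e ∈ G, e.card = r

/-- `S` is (the edge set of) a copy of `K_q^r`: all `r`-subsets of some `q`-set. -/
def IsClique {V : Type*} [DecidableEq V] (q r : ℕ) (S : Finset (Finset V)) : Prop :=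
  ∃ T : Finset V, T.card = q ∧ S = T.powersetCard r

/-- `Q` is a `K_q^r`-decomposition of `G`: a set of copies of `K_q^r` such that every edge
of `G` lies in exactly one of them (and these cliques cover exactly `G`). -/
def IsDecomp {V : Type*} [DecidableEq V] (q r : ℕ) (G : Finset (Finset V))
    (Q : Finset (Finset (Finset V))) : Prop :=
  (∀ S ∈ Q, IsClique q r S) ∧ ∀ e : Finset V, e ∈ G ↔ ∃! S, S ∈ Q ∧ e ∈ S

/-- `G` admits a `K_q^r`-decomposition. -/
def HasDecomp {V : Type*} [DecidableEq V] (q r : ℕ) (G : Finset (Finset V)) : Prop :=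
  ∃ Q, IsDecomp q r G Q

/-- The vertex set `W` is independent in `G`: no edge of `G` lies inside `W`. -/
def Indep {V : Type*} [DecidableEq V] (G : Finset (Finset V)) (W : Finset V) : Prop :=
  ∀ e ∈ G, ¬ e ⊆ W

/-- `G` is `K_q^r`-divisible: for every vertex set `S` with `|S| = i ≤ r - 1`, the binomial
coefficient `C(q - i, r - i)` divides the number of edges of `G` containing `S`. -/
def Divisible {V : Type*} [DecidableEq V] (q r : ℕ) (G : Finset (Finset V)) : Prop :=
  ∀ S : Finset V, S.card < r →
    Nat.choose (q - S.card) (r - S.card) ∣ (G.filter (fun e => S ⊆ e)).card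

/-- The complete `q`-partite `r`-graph `K_{q*n}^r` (parts indexed by `Fin q`, each of size `n`):
all `r`-sets of vertices with at most one vertex in each part. -/
def multipartite (q r n : ℕ) : Finset (Finset (Fin q × Fin n)) :=
  (Finset.univ.powersetCard r).filter
    (fun e => ∀ u ∈ e, ∀ w ∈ e, Prod.fst u = Prod.fst w → u = w)


open Polynomial Finset

set_option linter.unusedSectionVars false
set_option linter.unusedVariables false
set_option linter.deprecated false

namespace TwoDisjointAux

variable {q r n : ℕ}

/-- The transversal (graph) of a function `f : Fin q → Fin n`. -/
def tv (q : ℕ) {n : ℕ} (f : Fin q → Fin n) : Finset (Fin q × Fin n) :=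
  Finset.univ.image fun i => (i, f i)

lemma mem_tv {f : Fin q → Fin n} {v : Fin q × Fin n} : v ∈ tv q f ↔ f v.1 = v.2 := by
  constructor
  · intro h
    simp only [tv, mem_image, mem_univ, true_and] at h
    obtain ⟨i, hi⟩ := h
    rw [← hi]
  · intro h
    simp only [tv, mem_image, mem_univ, true_and]
    exact ⟨v.1, by rw [h]⟩

lemma card_tv (f : Fin q → Fin n) : (tv q f).card = q := by
  rw [tv, Finset.card_image_of_injective _ (fun a b h => congrArg Prod.fst h),
    card_univ, Fintype.card_fin]

lemma powersetCard_injective {V : Type*} [DecidableEq V] {T₁ T₂ : Finset V}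
    (hr : 1 ≤ r) (h1 : r ≤ T₁.card) (h2 : r ≤ T₂.card)
    (h : T₁.powersetCard r = T₂.powersetCard r) : T₁ = T₂ := by
  have key : ∀ T T' : Finset V, r ≤ T.card → T.powersetCard r = T'.powersetCard r →
      T ⊆ T' := by
    intro T T' hT hTT' v hv
    obtain ⟨u, hu1, hu2, hu3⟩ := Finset.exists_subsuperset_card_eq (n := r - 1 + ({v} : Finset V).card)
      (Finset.singleton_subset_iff.2 hv) (Nat.le_add_left _ _) (by rw [Finset.card_singleton]; omega)
    rw [Finset.card_singleton] at hu3
    have hu3 : u.card = r := by omega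
    have : u ∈ T'.powersetCard r := by
      rw [← hTT', Finset.mem_powersetCard]; exact ⟨hu2, hu3⟩
    exact (Finset.mem_powersetCard.1 this).1 (hu1 (Finset.mem_singleton_self v))
  exact le_antisymm (key _ _ h1 h) (key _ _ h2 h.symm)


section Poly
variable [NeZero n]

/-- The function `Fin q → Fin n` induced by a polynomial over `ZMod n`. -/
def fn (q : ℕ) (P : Polynomial (ZMod n)) (i : Fin q) : Fin n :=
  ⟨(P.eval ((i : ℕ) : ZMod n)).val, ZMod.val_lt _⟩

lemma fn_eq_iff {P : Polynomial (ZMod n)} {i : Fin q} {y : Fin n} :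
    fn q P i = y ↔ P.eval ((i : ℕ) : ZMod n) = ((y : ℕ) : ZMod n) := by
  rw [Fin.ext_iff]
  show (P.eval _).val = (y : ℕ) ↔ _
  constructor
  · intro h
    rw [← h]
    exact (ZMod.natCast_rightInverse _).symm
  · intro h
    rw [h, ZMod.val_natCast_of_lt y.2]

/-- The polynomial with coefficient vector `a`. -/
noncomputable def Pa (n : ℕ) {r : ℕ} (a : Fin r → ZMod n) : Polynomial (ZMod n) :=
  ∑ j : Fin r, C (a j) * X ^ (j : ℕ)

lemma degree_Pa_lt (hr : 1 ≤ r) (a : Fin r → ZMod n) : (Pa n a).degree < (r : ℕ) := by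
  refine lt_of_le_of_lt (Polynomial.degree_sum_le _ _) ?_
  rw [Finset.sup_lt_iff (by exact_mod_cast WithBot.bot_lt_coe r)]
  intro j _
  refine lt_of_le_of_lt (Polynomial.degree_C_mul_X_pow_le _ _) ?_
  exact_mod_cast j.2

lemma exists_Pa {g : Polynomial (ZMod n)} (hg : g.degree < (r : ℕ)) :
    ∃ a : Fin r → ZMod n, Pa n a = g := by
  refine ⟨fun j => g.coeff j, Polynomial.ext fun k => ?_⟩
  rw [Pa, Polynomial.finset_sum_coeff]
  simp only [Polynomial.coeff_C_mul, Polynomial.coeff_X_pow]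
  by_cases hk : k < r
  · rw [Finset.sum_eq_single (⟨k, hk⟩ : Fin r)]
    · simp
    · intro b _ hb
      have hne : k ≠ (b : ℕ) := fun h => hb (Fin.ext h.symm)
      simp [hne]
    · simp
  · rw [Polynomial.coeff_eq_zero_of_degree_lt
      (lt_of_lt_of_le hg (by exact_mod_cast Nat.le_of_not_lt hk))]
    refine Finset.sum_eq_zero fun b _ => ?_
    have hne : k ≠ (b : ℕ) := fun h => hk (h ▸ b.2)
    simp [hne]

lemma val_fn (P : Polynomial (ZMod n)) (i : Fin q) :
    ((fn q P i : ℕ) : ZMod n) = P.eval ((i : ℕ) : ZMod n) :=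
  ZMod.natCast_rightInverse _

end Poly

end TwoDisjointAux


open Polynomial Finset in
lemma TwoDisjointAux.mem_mp {q r n : ℕ} {e : Finset (Fin q × Fin n)} :
    e ∈ multipartite q r n ↔ e.card = r ∧ ∀ u ∈ e, ∀ w ∈ e, u.1 = w.1 → u = w := by
  simp only [multipartite, Finset.mem_filter, Finset.mem_powersetCard_univ]

namespace TwoDisjointAux

open Polynomial Finset

variable {q r n : ℕ}

/-- The candidate decomposition attached to a "base" polynomial `P0`. -/
noncomputable def Qof (q r n : ℕ) [NeZero n] (P0 : Polynomial (ZMod n)) :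
    Finset (Finset (Finset (Fin q × Fin n))) :=
  Finset.univ.image fun a : Fin r → ZMod n => (tv q (fn q (P0 + Pa n a))).powersetCard r

lemma subset_tv_iff [NeZero n] {P : Polynomial (ZMod n)} {e : Finset (Fin q × Fin n)} :
    e ⊆ tv q (fn q P) ↔ ∀ v ∈ e, P.eval ((v.1 : ℕ) : ZMod n) = ((v.2 : ℕ) : ZMod n) := by
  constructor
  · intro h v hv
    exact fn_eq_iff.1 (mem_tv.1 (h hv))
  · intro h v hv
    exact mem_tv.2 (fn_eq_iff.2 (h v hv))

lemma isDecomp_Qof (hr : 1 ≤ r) (hrq : r < q) (hqn : q < n) [Fact n.Prime]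
    (P0 : Polynomial (ZMod n)) :
    IsDecomp q r (multipartite q r n) (Qof q r n P0) := by
  have xinj : ∀ u w : Fin q × Fin n,
      ((u.1 : ℕ) : ZMod n) = ((w.1 : ℕ) : ZMod n) → u.1 = w.1 := by
    intro u w h
    have := congrArg ZMod.val h
    rwa [ZMod.val_natCast_of_lt (lt_trans u.1.2 hqn),
      ZMod.val_natCast_of_lt (lt_trans w.1.2 hqn), ← Fin.ext_iff] at this
  constructor
  · intro S hS
    obtain ⟨a, -, rfl⟩ := Finset.mem_image.1 hS
    exact ⟨_, card_tv _, rfl⟩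
  · intro e
    constructor
    · intro he
      obtain ⟨hcard, hfst⟩ := mem_mp.1 he
      set x : Fin q × Fin n → ZMod n := fun v => ((v.1 : ℕ) : ZMod n) with hx
      have hinj : Set.InjOn x e := fun u hu w hw h => hfst u hu w hw (xinj u w h)
      set y : Fin q × Fin n → ZMod n :=
        fun v => ((v.2 : ℕ) : ZMod n) - P0.eval (x v) with hy
      set g := Lagrange.interpolate e x y with hg
      have hgdeg : g.degree < (r : ℕ) := by
        have := Lagrange.degree_interpolate_lt y hinj
        rwa [hcard] at this
      obtain ⟨a, ha⟩ := exists_Pa hgdeg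
      have heval : ∀ b : Fin r → ZMod n, e ⊆ tv q (fn q (P0 + Pa n b)) ↔
          ∀ v ∈ e, (Pa n b).eval (x v) = y v := by
        intro b
        rw [subset_tv_iff]
        refine forall₂_congr fun v hv => ?_
        show eval (x v) (P0 + Pa n b) = ((v.2 : ℕ) : ZMod n) ↔ _
        simp only [hy, eval_add]
        rw [eq_sub_iff_add_eq, add_comm]
      refine ⟨(tv q (fn q (P0 + Pa n a))).powersetCard r,
        ⟨Finset.mem_image_of_mem _ (Finset.mem_univ a), ?_⟩, ?_⟩
      · rw [Finset.mem_powersetCard]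
        refine ⟨(heval a).2 fun v hv => ?_, hcard⟩
        rw [ha, hg, Lagrange.eval_interpolate_at_node y hinj hv]
      · rintro S' ⟨hS', heS'⟩
        obtain ⟨b, -, rfl⟩ := Finset.mem_image.1 hS'
        obtain ⟨hsub, -⟩ := Finset.mem_powersetCard.1 heS'
        have hb : Pa n b = g := by
          refine Lagrange.eq_interpolate_of_eval_eq y hinj ?_ ((heval b).1 hsub)
          rw [hcard]; exact degree_Pa_lt hr b
        rw [hb, ← ha]
    · rintro ⟨S, ⟨hS, heS⟩, -⟩
      obtain ⟨a, -, rfl⟩ := Finset.mem_image.1 hS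
      obtain ⟨hsub, hcard⟩ := Finset.mem_powersetCard.1 heS
      refine mem_mp.2 ⟨hcard, fun u hu w hw h1 => ?_⟩
      have hu' := mem_tv.1 (hsub hu)
      have hw' := mem_tv.1 (hsub hw)
      exact Prod.ext h1 (by rw [← hu', ← hw', h1])

end TwoDisjointAux

/-- For all integers `q > r ≥ 1` and every prime `n ≥ 2q - r`, the complete `q`-partite
`r`-graph `K_{q*n}^r` admits two `K_q^r`-decompositions sharing no clique. -/
theorem two_disjoint_decompositions {q r n : ℕ}
    (hr : 1 ≤ r) (hq : r < q) (hn : n.Prime) (hnq : 2 * q - r ≤ n) :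
    ∃ Q₁ Q₂ : Finset (Finset (Finset (Fin q × Fin n))),
      IsDecomp q r (multipartite q r n) Q₁ ∧ IsDecomp q r (multipartite q r n) Q₂ ∧
      Q₁ ∩ Q₂ = ∅ := by
  haveI : Fact n.Prime := ⟨hn⟩
  haveI : NeZero n := ⟨hn.pos.ne'⟩
  have hqn : q < n := by omega
  open TwoDisjointAux Polynomial in
  refine ⟨Qof q r n 0, Qof q r n (X ^ r),
    isDecomp_Qof hr hq hqn 0, isDecomp_Qof hr hq hqn _, ?_⟩
  rw [Finset.eq_empty_iff_forall_notMem]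
  intro S hS
  obtain ⟨h1, h2⟩ := Finset.mem_inter.1 hS
  obtain ⟨a, -, rfl⟩ := Finset.mem_image.1 h1
  obtain ⟨b, -, hb⟩ := Finset.mem_image.1 h2
  have htv := powersetCard_injective hr
    (by rw [card_tv]; omega) (by rw [card_tv]; omega) hb
  have hfn : ∀ i : Fin q, (X ^ r + Pa n b).eval ((i : ℕ) : ZMod n)
      = ((0 : Polynomial (ZMod n)) + Pa n a).eval ((i : ℕ) : ZMod n) := by
    intro i
    have hmem : (i, fn q (X ^ r + Pa n b) i) ∈ tv q (fn q (X ^ r + Pa n b)) :=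
      mem_tv.2 rfl
    rw [htv] at hmem
    have h1 : fn q ((0 : Polynomial (ZMod n)) + Pa n a) i = fn q (X ^ r + Pa n b) i :=
      mem_tv.1 hmem
    have := congrArg (fun z : Fin n => ((z : ℕ) : ZMod n)) h1
    simp only [val_fn] at this
    exact this.symm
  have hinj : Set.InjOn (fun i : Fin q => ((i : ℕ) : ZMod n)) (Finset.univ : Finset (Fin q)) := by
    intro u hu w hw h
    have := congrArg ZMod.val h
    rwa [ZMod.val_natCast_of_lt (lt_trans u.2 hqn),
      ZMod.val_natCast_of_lt (lt_trans w.2 hqn), ← Fin.ext_iff] at this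
  have hdeg : ((X ^ r + Pa n b) - ((0 : Polynomial (ZMod n)) + Pa n a)).degree
      < ((Finset.univ : Finset (Fin q)).card : WithBot ℕ) := by
    rw [Finset.card_univ, Fintype.card_fin]
    refine lt_of_le_of_lt (b := ((r : ℕ) : WithBot ℕ))
      ((Polynomial.degree_sub_le _ _).trans (max_le ?_ ?_)) (by exact_mod_cast hq)
    · exact (Polynomial.degree_add_le _ _).trans
        (max_le (Polynomial.degree_X_pow_le r) (le_of_lt (degree_Pa_lt hr b)))
    · rw [zero_add]
      exact le_of_lt (degree_Pa_lt hr a)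
  have hD0 : (X ^ r + Pa n b) - ((0 : Polynomial (ZMod n)) + Pa n a) = 0 :=
    Polynomial.eq_zero_of_degree_lt_of_eval_index_eq_zero Finset.univ hinj hdeg
      (fun i _ => by rw [Polynomial.eval_sub, hfn i, sub_self])
  have hDdeg : ((X ^ r + Pa n b) - ((0 : Polynomial (ZMod n)) + Pa n a)).degree
      = (r : WithBot ℕ) := by
    have heq : (X ^ r + Pa n b) - ((0 : Polynomial (ZMod n)) + Pa n a)
        = X ^ r + (Pa n b - Pa n a) := by ring
    rw [heq, Polynomial.degree_add_eq_left_of_degree_lt, Polynomial.degree_X_pow]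
    rw [Polynomial.degree_X_pow]
    exact (Polynomial.degree_sub_le _ _).trans_lt
      (max_lt (degree_Pa_lt hr b) (degree_Pa_lt hr a))
  rw [hD0, Polynomial.degree_zero] at hDdeg
  exact absurd hDdeg (by simp)
end

section
/- Let q > r ≥ 1. If L is a K_q^r-divisible r-graph with at least q + r vertices, then L admits an integral K_q^r-decomposition: an assignment of integers w_Q to the q-subsets Q of V(L) such that for every edge e of L, the sum of w_Q over q-sets Q containing e equals 1, and for every r-subset f of V(L) not an edge of L, the sum of w_Q over q-sets Q containing f equals 0. -/
open Finset


/-- Sum of `c` over `r`-subsets of `W` containing `S`. -/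
def dsum (r : ℕ) (W S : Finset ℕ) (c : Finset ℕ → ℤ) : ℤ :=
  ∑ f ∈ (W.powersetCard r).filter (fun f => S ⊆ f), c f

lemma card_between_core {S T : Finset ℕ} (hST : S ⊆ T) {r : ℕ} (hSr : S.card ≤ r) :
    ((T.powersetCard r).filter (fun f => S ⊆ f)).card
      = (T.card - S.card).choose (r - S.card) := by
  rw [← Finset.card_sdiff_of_subset hST, ← Finset.card_powersetCard (r - S.card) (T \ S)]
  apply Finset.card_nbij' (fun f => f \ S) (fun u => u ∪ S)
  · intro f hf
    simp only [mem_coe, mem_filter, mem_powersetCard] at hf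
    obtain ⟨⟨hfT, hfc⟩, hSf⟩ := hf
    simp only [mem_coe, mem_powersetCard]
    exact ⟨sdiff_subset_sdiff hfT (subset_refl S), by rw [card_sdiff_of_subset hSf, hfc]⟩
  · intro u hu
    simp only [mem_coe, mem_powersetCard] at hu
    obtain ⟨huT, huc⟩ := hu
    have hdisj : Disjoint u S := (Finset.sdiff_disjoint.mono_left huT)
    simp only [mem_coe, mem_filter, mem_powersetCard]
    refine ⟨⟨union_subset (huT.trans sdiff_subset) hST, ?_⟩, subset_union_right⟩
    rw [card_union_of_disjoint hdisj, huc]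
    omega
  · intro f hf
    simp only [mem_coe, mem_filter, mem_powersetCard] at hf
    exact sdiff_union_of_subset hf.2
  · intro u hu
    simp only [mem_coe, mem_powersetCard] at hu
    exact union_sdiff_cancel_right (Finset.sdiff_disjoint.mono_left hu.1)

lemma card_between_zero {S T : Finset ℕ} {r : ℕ} (h : ¬ (S ⊆ T ∧ S.card ≤ r)) :
    ((T.powersetCard r).filter (fun f => S ⊆ f)).card = 0 := by
  rw [Finset.card_eq_zero, Finset.filter_eq_empty_iff]
  intro f hf
  simp only [mem_powersetCard] at hf
  intro hSf
  exact h ⟨hSf.trans hf.1, hf.2 ▸ card_le_card hSf⟩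

lemma sum_level {W S : Finset ℕ} {i j r : ℕ} (hSi : S.card = i)
    (hij : i ≤ j) (hjr : j ≤ r) (c : Finset ℕ → ℤ) :
    ∑ S' ∈ (W.powersetCard j).filter (fun S' => S ⊆ S'), dsum r W S' c
      = ((r - i).choose (j - i) : ℤ) * dsum r W S c := by
  unfold dsum
  rw [sum_filter]
  have step1 : ∀ S' ∈ W.powersetCard j,
      (if S ⊆ S' then ∑ f ∈ (W.powersetCard r).filter (fun f => S' ⊆ f), c f else 0)
        = ∑ f ∈ W.powersetCard r, (if S ⊆ S' ∧ S' ⊆ f then c f else 0) := by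
    intro S' _
    by_cases h : S ⊆ S'
    · simp only [h, if_true, true_and, sum_filter]
    · simp [h]
  rw [Finset.sum_congr rfl step1, Finset.sum_comm]
  have step2 : ∀ f ∈ W.powersetCard r,
      (∑ S' ∈ W.powersetCard j, (if S ⊆ S' ∧ S' ⊆ f then c f else 0))
        = (if S ⊆ f then ((r - i).choose (j - i) : ℤ) else 0) * c f := by
    intro f hf
    have hfW : f ⊆ W := (mem_powersetCard.mp hf).1
    have hfc : f.card = r := (mem_powersetCard.mp hf).2
    rw [← sum_filter]
    have hset : (W.powersetCard j).filter (fun S' => S ⊆ S' ∧ S' ⊆ f)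
        = (f.powersetCard j).filter (fun S' => S ⊆ S') := by
      ext S'
      simp only [mem_filter, mem_powersetCard]
      constructor
      · rintro ⟨⟨_, hc⟩, hS, hSf⟩; exact ⟨⟨hSf, hc⟩, hS⟩
      · rintro ⟨⟨hSf, hc⟩, hS⟩; exact ⟨⟨hSf.trans hfW, hc⟩, hS, hSf⟩
    rw [hset, sum_const, nsmul_eq_mul]
    by_cases hSf : S ⊆ f
    · rw [card_between_core hSf (by omega : S.card ≤ j), hfc, hSi, if_pos hSf]
    · rw [card_between_zero (by tauto), if_neg hSf]
      simp
  rw [Finset.sum_congr rfl step2]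
  rw [Finset.mul_sum, sum_filter]
  apply Finset.sum_congr rfl
  intro f _
  by_cases hSf : S ⊆ f <;> simp [hSf]

lemma sum_insert_erase {W : Finset ℕ} {x : ℕ} (hx : x ∈ W) {r : ℕ} (S : Finset ℕ)
    (c : Finset ℕ → ℤ) :
    (∑ f ∈ ((W.powersetCard (r+1)).filter (fun f => S ⊆ f)),
        if x ∈ f then c (f.erase x) else 0)
      = ∑ g ∈ (((W.erase x).powersetCard r).filter (fun g => S.erase x ⊆ g)), c g := by
  rw [← sum_filter]
  apply Finset.sum_nbij' (fun f => f.erase x) (fun g => insert x g)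
  · intro f hf
    simp only [mem_filter, mem_powersetCard] at hf
    obtain ⟨⟨⟨hfW, hfc⟩, hSf⟩, hxf⟩ := hf
    simp only [mem_filter, mem_powersetCard]
    exact ⟨⟨erase_subset_erase x hfW, by rw [card_erase_of_mem hxf, hfc]; rfl⟩,
      erase_subset_erase x hSf⟩
  · intro g hg
    simp only [mem_filter, mem_powersetCard] at hg
    obtain ⟨⟨hgW, hgc⟩, hSg⟩ := hg
    have hxg : x ∉ g := fun h => (mem_erase.mp (hgW h)).1 rfl
    simp only [mem_filter, mem_powersetCard]
    refine ⟨⟨⟨insert_subset hx (hgW.trans (erase_subset x W)), ?_⟩, ?_⟩, mem_insert_self x g⟩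
    · rw [card_insert_of_notMem hxg, hgc]
    · intro u hu
      by_cases hux : u = x
      · exact hux ▸ mem_insert_self x g
      · exact mem_insert_of_mem (hSg (mem_erase.mpr ⟨hux, hu⟩))
  · intro f hf
    simp only [mem_filter] at hf
    exact insert_erase hf.2
  · intro g hg
    simp only [mem_filter, mem_powersetCard] at hg
    exact erase_insert (fun h => (mem_erase.mp (hg.1.1 h)).1 rfl)
  · intro f _; rfl

lemma dsum_supp {s U : Finset ℕ} (hsU : s ⊆ U) {r : ℕ} (S : Finset ℕ) {c : Finset ℕ → ℤ}
    (hsupp : ∀ f, ¬ f ⊆ s → c f = 0) :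
    dsum r U S c = dsum r s S c := by
  unfold dsum
  refine (Finset.sum_subset ?_ ?_).symm
  · exact Finset.filter_subset_filter _ (Finset.powersetCard_mono hsU)
  · intro f hf hnf
    refine hsupp f (fun hfs => hnf ?_)
    simp only [mem_filter, mem_powersetCard] at *
    exact ⟨⟨hfs, hf.1.2⟩, hf.2⟩

lemma filter_erase_eq (W : Finset ℕ) (x : ℕ) (r : ℕ) (S : Finset ℕ) :
    ((W.powersetCard r).filter (fun f => S ⊆ f)).filter (fun f => ¬ x ∈ f)
      = ((W.erase x).powersetCard r).filter (fun f => S ⊆ f) := by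
  ext f
  simp only [mem_filter, mem_powersetCard, subset_erase]
  tauto

lemma sum_list_swap {α : Type*} (F : Finset (Finset ℕ)) (l : List α) (g : α → Finset ℕ → ℤ) :
    ∑ f ∈ F, (l.map (fun t => g t f)).sum = (l.map (fun t => ∑ f ∈ F, g t f)).sum := by
  induction l with
  | nil => simp
  | cons a l ih => simp [Finset.sum_add_distrib, ih]

/-- A pod (signed product of `r` disjoint pairs) with support `s`. -/
inductive Pod : ℕ → Finset ℕ → (Finset ℕ → ℤ) → Prop
  | zero : Pod 0 ∅ (fun f => if f = ∅ then 1 else 0)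
  | succ {r : ℕ} {s : Finset ℕ} {c : Finset ℕ → ℤ} (x y : ℕ)
      (hx : x ∉ s) (hy : y ∉ s) (hxy : x ≠ y) (h : Pod r s c) :
      Pod (r+1) (insert x (insert y s))
        (fun f => (if x ∈ f then c (f.erase x) else 0) - (if y ∈ f then c (f.erase y) else 0))

lemma Pod.card2 {r : ℕ} {s : Finset ℕ} {c : Finset ℕ → ℤ} (h : Pod r s c) :
    s.card = 2 * r := by
  induction h with
  | zero => simp
  | @succ r' s' c' x y hx hy hxy h ih =>
    have hx' : x ∉ insert y s' := by simp [Finset.mem_insert, hxy, hx]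
    rw [card_insert_of_notMem hx', card_insert_of_notMem hy, ih]
    omega

lemma Pod.supp {r : ℕ} {s : Finset ℕ} {c : Finset ℕ → ℤ} (h : Pod r s c) :
    ∀ f, ¬ f ⊆ s → c f = 0 := by
  induction h with
  | zero =>
    intro f hf
    have hne : f ≠ ∅ := by intro h'; exact hf (by simp [h'])
    simp [hne]
  | @succ r' s' c' x y hx hy hxy h ih =>
    intro f hf
    dsimp only
    have h1 : (if x ∈ f then c' (f.erase x) else 0) = 0 := by
      by_cases hxf : x ∈ f
      · rw [if_pos hxf]
        apply ih
        intro hes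
        apply hf
        intro u hu
        by_cases hux : u = x
        · rw [hux]; exact mem_insert_self x _
        · exact mem_insert_of_mem (mem_insert_of_mem (hes (mem_erase.mpr ⟨hux, hu⟩)))
      · rw [if_neg hxf]
    have h2 : (if y ∈ f then c' (f.erase y) else 0) = 0 := by
      by_cases hyf : y ∈ f
      · rw [if_pos hyf]
        apply ih
        intro hes
        apply hf
        intro u hu
        by_cases huy : u = y
        · rw [huy]; exact mem_insert_of_mem (mem_insert_self y _)
        · exact mem_insert_of_mem (mem_insert_of_mem (hes (mem_erase.mpr ⟨huy, hu⟩)))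
      · rw [if_neg hyf]
    rw [h1, h2, sub_zero]

lemma Pod.null {r : ℕ} {s : Finset ℕ} {c : Finset ℕ → ℤ} (h : Pod r s c) :
    ∀ (W S : Finset ℕ), s ⊆ W → S ⊆ W → S.card + 1 = r → dsum r W S c = 0 := by
  induction h with
  | zero => intro W S _ _ hcard; omega
  | @succ r' s' c' x y hx hy hxy h ih =>
    intro W S hsW hSW hScard
    have hxW : x ∈ W := hsW (mem_insert_self _ _)
    have hyW : y ∈ W := hsW (mem_insert_of_mem (mem_insert_self _ _))
    have hsW' : s' ⊆ W := fun u hu => hsW (mem_insert_of_mem (mem_insert_of_mem hu))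
    have key : ∀ (U S' : Finset ℕ) (v : ℕ), v ∈ S' → v ∉ s' → dsum r' U S' c' = 0 := by
      intro U S' v hv hvs
      apply Finset.sum_eq_zero
      intro g hg
      simp only [mem_filter] at hg
      exact h.supp g (fun hgs => hvs (hgs (hg.2 hv)))
    unfold dsum
    dsimp only
    rw [Finset.sum_sub_distrib, sum_insert_erase hxW S c', sum_insert_erase hyW S c']
    by_cases hxS : x ∈ S <;> by_cases hyS : y ∈ S
    · rw [show (∑ g ∈ ((W.erase x).powersetCard r').filter (fun g => S.erase x ⊆ g), c' g)
          = dsum r' (W.erase x) (S.erase x) c' from rfl,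
        show (∑ g ∈ ((W.erase y).powersetCard r').filter (fun g => S.erase y ⊆ g), c' g)
          = dsum r' (W.erase y) (S.erase y) c' from rfl,
        key (W.erase x) (S.erase x) y (mem_erase.mpr ⟨fun h' => hxy h'.symm, hyS⟩) hy,
        key (W.erase y) (S.erase y) x (mem_erase.mpr ⟨hxy, hxS⟩) hx, sub_zero]
    · rw [show (∑ g ∈ ((W.erase x).powersetCard r').filter (fun g => S.erase x ⊆ g), c' g)
          = dsum r' (W.erase x) (S.erase x) c' from rfl,
        show (∑ g ∈ ((W.erase y).powersetCard r').filter (fun g => S.erase y ⊆ g), c' g)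
          = dsum r' (W.erase y) (S.erase y) c' from rfl,
        erase_eq_of_notMem hyS,
        ih (W.erase x) (S.erase x)
          (subset_erase.mpr ⟨hsW', hx⟩) (erase_subset_erase x hSW)
          (by have h1 : 0 < S.card := card_pos.mpr ⟨x, hxS⟩; rw [card_erase_of_mem hxS]; omega),
        key (W.erase y) S x hxS hx, sub_zero]
    · rw [show (∑ g ∈ ((W.erase x).powersetCard r').filter (fun g => S.erase x ⊆ g), c' g)
          = dsum r' (W.erase x) (S.erase x) c' from rfl,
        show (∑ g ∈ ((W.erase y).powersetCard r').filter (fun g => S.erase y ⊆ g), c' g)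
          = dsum r' (W.erase y) (S.erase y) c' from rfl,
        erase_eq_of_notMem hxS,
        ih (W.erase y) (S.erase y)
          (subset_erase.mpr ⟨hsW', hy⟩) (erase_subset_erase y hSW)
          (by have h1 : 0 < S.card := card_pos.mpr ⟨y, hyS⟩; rw [card_erase_of_mem hyS]; omega),
        key (W.erase x) S y hyS hy, sub_self]
    · rw [show (∑ g ∈ ((W.erase x).powersetCard r').filter (fun g => S.erase x ⊆ g), c' g)
          = dsum r' (W.erase x) (S.erase x) c' from rfl,
        show (∑ g ∈ ((W.erase y).powersetCard r').filter (fun g => S.erase y ⊆ g), c' g)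
          = dsum r' (W.erase y) (S.erase y) c' from rfl,
        erase_eq_of_notMem hxS, erase_eq_of_notMem hyS,
        dsum_supp (subset_erase.mpr ⟨hsW', hx⟩) S h.supp,
        dsum_supp (subset_erase.mpr ⟨hsW', hy⟩) S h.supp, sub_self]

lemma gottlieb {m : ℕ} {W : Finset ℕ} (hW : W.card ≤ 2 * m + 1) {c : Finset ℕ → ℤ}
    (hnull : ∀ S ∈ W.powersetCard m, dsum (m+1) W S c = 0) :
    ∀ f ∈ W.powersetCard (m+1), c f = 0 := by
  classical
  set u : Finset ℕ → ℤ :=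
    fun g => ∑ f ∈ (W.powersetCard (m+1)).filter (fun f => f ⊆ g), c f with hu
  -- Step B : the "codegree-one" sum
  have keyD : ∀ f ∈ W.powersetCard (m+1),
      (∑ f' ∈ W.powersetCard (m+1), if (f \ f').card = 1 then c f' else 0)
        = -((m:ℤ)+1) * c f := by
    intro f hf
    obtain ⟨hfW, hfc⟩ := mem_powersetCard.mp hf
    have h0 : (∑ v ∈ f, dsum (m+1) W (f.erase v) c) = 0 := by
      apply Finset.sum_eq_zero
      intro v hv
      exact hnull _ (mem_powersetCard.mpr ⟨(erase_subset v f).trans hfW,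
        by rw [card_erase_of_mem hv, hfc]; rfl⟩)
    have h1 : (∑ v ∈ f, dsum (m+1) W (f.erase v) c)
        = ∑ f' ∈ W.powersetCard (m+1),
            ((f.filter (fun v => f.erase v ⊆ f')).card : ℤ) * c f' := by
      have e1 : ∀ v ∈ f, dsum (m+1) W (f.erase v) c
          = ∑ f' ∈ W.powersetCard (m+1), if f.erase v ⊆ f' then c f' else 0 := by
        intro v _
        unfold dsum
        rw [sum_filter]
      rw [Finset.sum_congr rfl e1, Finset.sum_comm]
      apply Finset.sum_congr rfl
      intro f' _
      rw [← sum_filter, sum_const, nsmul_eq_mul]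
    have h2 : ∀ f' ∈ W.powersetCard (m+1),
        ((f.filter (fun v => f.erase v ⊆ f')).card : ℤ) * c f'
          = (if f' = f then ((m:ℤ)+1) * c f' else 0)
            + (if (f \ f').card = 1 then c f' else 0) := by
      intro f' hf'
      obtain ⟨hf'W, hf'c⟩ := mem_powersetCard.mp hf'
      have hpred : f.filter (fun v => f.erase v ⊆ f') = f.filter (fun v => f \ f' ⊆ {v}) := by
        apply filter_congr
        intro v _
        constructor
        · intro hsub a ha
          obtain ⟨haf, hanf'⟩ := mem_sdiff.mp ha
          rw [mem_singleton]
          by_contra hav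
          exact hanf' (hsub (mem_erase.mpr ⟨hav, haf⟩))
        · intro hsub a ha
          obtain ⟨hav, haf⟩ := mem_erase.mp ha
          by_contra hanf'
          exact hav (mem_singleton.mp (hsub (mem_sdiff.mpr ⟨haf, hanf'⟩)))
      rw [hpred]
      by_cases ht0 : (f \ f').card = 0
      · have hsub : f ⊆ f' := sdiff_eq_empty_iff_subset.mp (card_eq_zero.mp ht0)
        have heq : f' = f := (eq_of_subset_of_card_le hsub (by omega)).symm
        have hfil : f.filter (fun v => f \ f' ⊆ {v}) = f := by
          apply filter_true_of_mem
          intro v _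
          rw [card_eq_zero.mp ht0]
          exact empty_subset _
        rw [hfil, hfc, if_pos heq, if_neg (by omega)]
        push_cast
        ring
      · by_cases ht1 : (f \ f').card = 1
        · obtain ⟨v₀, hv₀⟩ := card_eq_one.mp ht1
          have hv₀f : v₀ ∈ f := sdiff_subset (hv₀ ▸ mem_singleton_self v₀)
          have hfil : f.filter (fun v => f \ f' ⊆ {v}) = {v₀} := by
            have e : f.filter (fun v => f \ f' ⊆ {v}) = f.filter (fun v => v = v₀) := by
              apply filter_congr
              intro v _
              rw [hv₀]
              simp only [singleton_subset_iff, mem_singleton]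
              exact ⟨fun h => h.symm, fun h => h.symm⟩
            rw [e, filter_eq', if_pos hv₀f]
          have hne : f' ≠ f := by
            intro h
            rw [h] at ht1
            simp at ht1
          rw [hfil, if_neg hne, if_pos ht1, card_singleton]
          push_cast
          ring
        · have hfil : f.filter (fun v => f \ f' ⊆ {v}) = ∅ := by
            apply filter_false_of_mem
            intro v _ hsub
            have := card_le_card hsub
            rw [card_singleton] at this
            omega
          have hne : f' ≠ f := by
            intro h
            rw [h] at ht0
            simp at ht0
          rw [hfil, if_neg hne, if_neg ht1, card_empty]
          simp
    rw [h1, Finset.sum_congr rfl h2, Finset.sum_add_distrib, Finset.sum_ite_eq' _ f,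
      if_pos hf] at h0
    linarith
  -- Step A : the key degree identity
  have key1 : ∀ f ∈ W.powersetCard (m+1),
      (∑ g ∈ (W.powersetCard (m+2)).filter (fun g => f ⊆ g), u g)
        = ((W.card:ℤ) - (2*(m:ℤ)+2)) * c f := by
    intro f hf
    obtain ⟨hfW, hfc⟩ := mem_powersetCard.mp hf
    have swap : (∑ g ∈ (W.powersetCard (m+2)).filter (fun g => f ⊆ g), u g)
        = ∑ f' ∈ W.powersetCard (m+1),
            ((((W.powersetCard (m+2)).filter (fun g => f ∪ f' ⊆ g)).card : ℤ)) * c f' := by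
      rw [sum_filter]
      have e1 : ∀ g ∈ W.powersetCard (m+2),
          (if f ⊆ g then u g else 0)
            = ∑ f' ∈ W.powersetCard (m+1), if f ∪ f' ⊆ g then c f' else 0 := by
        intro g _
        by_cases hfg : f ⊆ g
        · rw [if_pos hfg, hu]
          dsimp only
          rw [sum_filter]
          apply Finset.sum_congr rfl
          intro f' _
          have : f ∪ f' ⊆ g ↔ f' ⊆ g := by
            rw [union_subset_iff]
            exact ⟨fun h => h.2, fun h => ⟨hfg, h⟩⟩
          simp only [this]
        · rw [if_neg hfg]
          apply (Finset.sum_eq_zero ?_).symm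
          intro f' _
          rw [if_neg (fun h => hfg ((subset_union_left).trans h))]
      rw [Finset.sum_congr rfl e1, Finset.sum_comm]
      apply Finset.sum_congr rfl
      intro f' _
      rw [← sum_filter, sum_const, nsmul_eq_mul]
    have h2 : ∀ f' ∈ W.powersetCard (m+1),
        ((((W.powersetCard (m+2)).filter (fun g => f ∪ f' ⊆ g)).card : ℤ)) * c f'
          = (if f' = f then ((W.card:ℤ) - ((m:ℤ)+1)) * c f' else 0)
            + (if (f \ f').card = 1 then c f' else 0) := by
      intro f' hf'
      obtain ⟨hf'W, hf'c⟩ := mem_powersetCard.mp hf'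
      have hcard_union : (f ∪ f').card = (f \ f').card + (m+1) := by
        rw [← hf'c, ← Finset.card_sdiff_add_card]
      by_cases ht0 : (f \ f').card = 0
      · have hsub : f ⊆ f' := sdiff_eq_empty_iff_subset.mp (card_eq_zero.mp ht0)
        have heq : f' = f := (eq_of_subset_of_card_le hsub (by omega)).symm
        have hm1W : m + 1 ≤ W.card := by
          have := card_le_card hfW
          omega
        rw [heq, union_self, card_between_core hfW (by omega), hfc,
          show m + 2 - (m+1) = 1 from by omega, Nat.choose_one_right,
          Nat.cast_sub hm1W, if_pos rfl, if_neg (by simp)]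
        push_cast
        ring
      · by_cases ht1 : (f \ f').card = 1
        · have hne : f' ≠ f := by
            intro h
            rw [h] at ht1
            simp at ht1
          have hun : f ∪ f' ⊆ W := union_subset hfW hf'W
          rw [card_between_core hun (by omega), if_neg hne, if_pos ht1]
          rw [show m + 2 - (f ∪ f').card = 0 by omega, Nat.choose_zero_right]
          push_cast
          ring
        · have hne : f' ≠ f := by
            intro h
            rw [h] at ht0
            simp at ht0
          rw [card_between_zero (by omega), if_neg hne, if_neg ht1]
          simp
    rw [swap, Finset.sum_congr rfl h2, Finset.sum_add_distrib, Finset.sum_ite_eq' _ f,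
      if_pos hf, keyD f hf]
    ring
  -- Step C : sum of squares identity
  have keyC : (∑ g ∈ W.powersetCard (m+2), (u g)^2)
      = ((W.card:ℤ) - (2*(m:ℤ)+2)) * ∑ f ∈ W.powersetCard (m+1), (c f)^2 := by
    have e1 : ∀ g ∈ W.powersetCard (m+2),
        (u g)^2 = ∑ f ∈ W.powersetCard (m+1), (if f ⊆ g then c f * u g else 0) := by
      intro g _
      rw [sq, hu]
      dsimp only
      rw [sum_filter, Finset.sum_mul]
      apply Finset.sum_congr rfl
      intro f _
      by_cases hfg : f ⊆ g <;> simp [hfg]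
    rw [Finset.sum_congr rfl e1, Finset.sum_comm, Finset.mul_sum]
    apply Finset.sum_congr rfl
    intro f hf
    have : (∑ g ∈ W.powersetCard (m+2), if f ⊆ g then c f * u g else 0)
        = c f * ∑ g ∈ (W.powersetCard (m+2)).filter (fun g => f ⊆ g), u g := by
      rw [← sum_filter, Finset.mul_sum]
    rw [this, key1 f hf, sq]
    ring
  -- Step D : positivity
  have hA : 0 ≤ ∑ g ∈ W.powersetCard (m+2), (u g)^2 :=
    Finset.sum_nonneg (fun g _ => sq_nonneg _)
  have hS : 0 ≤ ∑ f ∈ W.powersetCard (m+1), (c f)^2 :=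
    Finset.sum_nonneg (fun f _ => sq_nonneg _)
  have hcoef : ((W.card:ℤ) - (2*(m:ℤ)+2)) < 0 := by
    have : (W.card : ℤ) ≤ 2*(m:ℤ)+1 := by exact_mod_cast hW
    linarith
  have hzero : (∑ f ∈ W.powersetCard (m+1), (c f)^2) = 0 := by
    by_contra hne
    have hpos : 0 < ∑ f ∈ W.powersetCard (m+1), (c f)^2 := lt_of_le_of_ne hS (Ne.symm hne)
    have : (∑ g ∈ W.powersetCard (m+2), (u g)^2) < 0 := by
      rw [keyC]
      exact mul_neg_of_neg_of_pos hcoef hpos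
    linarith
  intro f hf
  have := (Finset.sum_eq_zero_iff_of_nonneg (fun f _ => sq_nonneg (c f))).mp hzero f hf
  exact pow_eq_zero_iff (by omega) |>.mp this

/-- Every null design is an integral combination of pods. -/
lemma podgen : ∀ (n : ℕ) (W : Finset ℕ), W.card = n → ∀ (r : ℕ), 1 ≤ r →
    ∀ (c : Finset ℕ → ℤ),
    (∀ S ∈ W.powersetCard (r-1), dsum r W S c = 0) →
    ∃ l : List (Finset ℕ × (Finset ℕ → ℤ) × ℤ),
      (∀ t ∈ l, Pod r t.1 t.2.1 ∧ t.1 ⊆ W) ∧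
      ∀ f ∈ W.powersetCard r, c f = (l.map (fun t => t.2.2 * t.2.1 f)).sum := by
  intro n
  induction n using Nat.strong_induction_on with
  | _ n ihn =>
  intro W hWn r hr c hnull
  match r, hr with
  | 1, _ =>
    -- base case r = 1
    rcases W.eq_empty_or_nonempty with rfl | hWne
    · refine ⟨[], by simp, ?_⟩
      intro f hf
      obtain ⟨hfW, hfc⟩ := mem_powersetCard.mp hf
      rw [subset_empty.mp hfW] at hfc
      simp at hfc
    · obtain ⟨v₀, hv₀⟩ := hWne
      have htot : (∑ v ∈ W, c {v}) = 0 := by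
        have h := hnull ∅ (by simp)
        unfold dsum at h
        rw [filter_true_of_mem (fun f _ => empty_subset f), powersetCard_one,
          Finset.sum_map] at h
        exact h
      refine ⟨(W.erase v₀).toList.map (fun v => ((insert v (insert v₀ ∅) : Finset ℕ),
        (fun f => (if v ∈ f then (if f.erase v = ∅ then (1:ℤ) else 0) else 0)
          - (if v₀ ∈ f then (if f.erase v₀ = ∅ then (1:ℤ) else 0) else 0)), c {v})), ?_, ?_⟩
      · intro t ht
        simp only [List.mem_map] at ht
        obtain ⟨v, hv, rfl⟩ := ht
        obtain ⟨hvv₀, hvW⟩ := mem_erase.mp (mem_toList.mp hv)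
        constructor
        · exact Pod.succ v v₀ (notMem_empty v) (notMem_empty v₀) hvv₀ Pod.zero
        · intro a ha
          rcases mem_insert.mp ha with rfl | ha'
          · exact hvW
          · rcases mem_insert.mp ha' with rfl | ha''
            · exact hv₀
            · exact absurd ha'' (notMem_empty a)
      · intro f hf
        have hfc := (mem_powersetCard.mp hf).2
        obtain ⟨u, rfl⟩ := card_eq_one.mp hfc
        have huW : u ∈ W := (mem_powersetCard.mp hf).1 (mem_singleton_self u)
        rw [List.map_map]
        have hconv : ∀ (g : ℕ → ℤ), ((W.erase v₀).toList.map g).sum = ∑ v ∈ W.erase v₀, g v := by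
          intro g
          rw [Finset.sum_map_toList]
        rw [show ((fun t : Finset ℕ × (Finset ℕ → ℤ) × ℤ => t.2.2 * t.2.1 {u}) ∘
            (fun v => ((insert v (insert v₀ ∅) : Finset ℕ),
            (fun f => (if v ∈ f then (if f.erase v = ∅ then (1:ℤ) else 0) else 0)
              - (if v₀ ∈ f then (if f.erase v₀ = ∅ then (1:ℤ) else 0) else 0)), c {v})))
          = fun v => c {v} * ((if v ∈ ({u} : Finset ℕ) then (if ({u}:Finset ℕ).erase v = ∅ then (1:ℤ) else 0) else 0)
              - (if v₀ ∈ ({u} : Finset ℕ) then (if ({u}:Finset ℕ).erase v₀ = ∅ then (1:ℤ) else 0) else 0)) from rfl]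
        rw [hconv]
        have hind : ∀ w : ℕ, ((if w ∈ ({u} : Finset ℕ) then (if ({u}:Finset ℕ).erase w = ∅ then (1:ℤ) else 0) else 0))
            = if w = u then 1 else 0 := by
          intro w
          by_cases hw : w = u
          · subst hw
            simp [Finset.erase_singleton]
          · simp [hw, Ne.symm, mem_singleton]
        have : ∀ v ∈ W.erase v₀,
            c {v} * ((if v ∈ ({u} : Finset ℕ) then (if ({u}:Finset ℕ).erase v = ∅ then (1:ℤ) else 0) else 0)
              - (if v₀ ∈ ({u} : Finset ℕ) then (if ({u}:Finset ℕ).erase v₀ = ∅ then (1:ℤ) else 0) else 0))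
            = c {v} * (if v = u then 1 else 0) - c {v} * (if v₀ = u then 1 else 0) := by
          intro v _
          rw [hind v, hind v₀]
          ring
        rw [Finset.sum_congr rfl this, Finset.sum_sub_distrib]
        by_cases huv₀ : u = v₀
        · subst huv₀
          have e1 : (∑ v ∈ W.erase u, c {v} * (if v = u then 1 else 0)) = 0 := by
            apply Finset.sum_eq_zero
            intro v hv
            rw [if_neg (mem_erase.mp hv).1, mul_zero]
          have e2 : (∑ v ∈ W.erase u, c {v} * (if u = u then 1 else 0))
              = ∑ v ∈ W.erase u, c {v} := by
            apply Finset.sum_congr rfl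
            intro v _
            rw [if_pos rfl, mul_one]
          rw [e1, e2]
          have := Finset.add_sum_erase W (fun v => c {v}) hv₀
          rw [htot] at this
          linarith
        · have e1 : (∑ v ∈ W.erase v₀, c {v} * (if v = u then 1 else 0)) = c {u} := by
            rw [show (fun v => c {v} * (if v = u then 1 else 0))
              = fun v => if v = u then c {v} else 0 from by funext v; by_cases h : v = u <;> simp [h]]
            rw [Finset.sum_ite_eq' (W.erase v₀) u (fun v => c {v}),
              if_pos (mem_erase.mpr ⟨huv₀, huW⟩)]
          have e2 : (∑ v ∈ W.erase v₀, c {v} * (if v₀ = u then 1 else 0)) = 0 := by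
            apply Finset.sum_eq_zero
            intro v _
            rw [if_neg (fun h => huv₀ h.symm), mul_zero]
          rw [e1, e2, sub_zero]
  | (r'+2), _ =>
    by_cases hsize : W.card < 2*(r'+2)
    · -- Gottlieb: the design is identically zero
      have hz := gottlieb (m := r'+1) (W := W) (by omega) (c := c) (fun S hS => hnull S hS)
      refine ⟨[], by simp, ?_⟩
      intro f hf
      simpa using hz f hf
    · -- recursive case
      push_neg at hsize
      have hWne : W.Nonempty := card_pos.mp (by omega)
      obtain ⟨x, hx⟩ := hWne
      set d : Finset ℕ → ℤ := fun g => c (insert x g) with hd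
      have hdnull : ∀ S ∈ (W.erase x).powersetCard (r'+1-1), dsum (r'+1) (W.erase x) S d = 0 := by
        intro S hS
        obtain ⟨hSW, hSc⟩ := mem_powersetCard.mp hS
        have hxS : x ∉ S := fun h => (mem_erase.mp (hSW h)).1 rfl
        have hS' : insert x S ∈ W.powersetCard (r'+1) := mem_powersetCard.mpr
          ⟨insert_subset hx (hSW.trans (erase_subset x W)),
           by rw [card_insert_of_notMem hxS, hSc]; omega⟩
        have h0 := hnull (insert x S) (by simpa using hS')
        unfold dsum at h0 ⊢
        rw [show (∑ f ∈ (W.powersetCard (r'+2)).filter (fun f => insert x S ⊆ f), c f)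
            = ∑ f ∈ (W.powersetCard (r'+1+1)).filter (fun f => insert x S ⊆ f),
                (if x ∈ f then (fun h => c (insert x h)) (f.erase x) else 0) from ?_] at h0
        · rw [sum_insert_erase hx (insert x S) (fun h => c (insert x h)),
            erase_insert hxS] at h0
          exact h0
        · apply Finset.sum_congr rfl
          intro f hf
          have hxf : x ∈ f := (mem_filter.mp hf).2 (mem_insert_self x S)
          rw [if_pos hxf]
          dsimp only
          rw [insert_erase hxf]
      obtain ⟨l', hl'pod, hl'sum⟩ := ihn (W.erase x).card
        (by rw [card_erase_of_mem hx]; omega) (W.erase x) rfl (r'+1) (by omega) d hdnull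
      -- choice of the auxiliary vertex for each pod
      have hYex : ∀ s : Finset ℕ, s ⊆ W.erase x → s.card = 2*(r'+1) →
          (W \ insert x s).Nonempty := by
        intro s hsW hsc
        rw [← card_pos]
        have h1 : (insert x s).card ≤ 2*(r'+1) + 1 := by
          rcases le_or_gt ((insert x s).card) (s.card + 1) with h | h
          · omega
          · have := card_insert_le x s
            omega
        have h2 : W.card - (insert x s).card ≤ (W \ insert x s).card := le_card_sdiff _ _
        omega
      classical
      set Y : Finset ℕ → ℕ := fun s => if h : (W \ insert x s).Nonempty then h.choose else 0
        with hY
      have hYspec : ∀ s : Finset ℕ, (W \ insert x s).Nonempty →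
          Y s ∈ W ∧ Y s ≠ x ∧ Y s ∉ s := by
        intro s hne
        have : Y s ∈ W \ insert x s := by
          rw [hY]
          dsimp only
          rw [dif_pos hne]
          exact hne.choose_spec
        obtain ⟨hYW, hYni⟩ := mem_sdiff.mp this
        exact ⟨hYW, fun h => hYni (h ▸ mem_insert_self x s),
          fun h => hYni (mem_insert_of_mem h)⟩
      -- build the lifted pods
      set mk : (Finset ℕ × (Finset ℕ → ℤ) × ℤ) → (Finset ℕ × (Finset ℕ → ℤ) × ℤ) :=
        fun t => ((insert x (insert (Y t.1) t.1)),
          (fun f => (if x ∈ f then t.2.1 (f.erase x) else 0)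
            - (if Y t.1 ∈ f then t.2.1 (f.erase (Y t.1)) else 0)),
          t.2.2) with hmk
      set l₁ : List (Finset ℕ × (Finset ℕ → ℤ) × ℤ) := l'.map mk with hl₁
      have hl₁fact : ∀ t ∈ l', Pod (r'+2) (insert x (insert (Y t.1) t.1)) (mk t).2.1
          ∧ insert x (insert (Y t.1) t.1) ⊆ W ∧ Y t.1 ∈ W ∧ Y t.1 ≠ x ∧ Y t.1 ∉ t.1
          ∧ x ∉ t.1 := by
        intro t ht
        obtain ⟨hpod, hsub⟩ := hl'pod t ht
        have hxs : x ∉ t.1 := fun h => (mem_erase.mp (hsub h)).1 rfl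
        have hne := hYex t.1 hsub hpod.card2
        obtain ⟨hYW, hYx, hYs⟩ := hYspec t.1 hne
        refine ⟨?_, ?_, hYW, hYx, hYs, hxs⟩
        · exact Pod.succ x (Y t.1) hxs hYs (fun h => hYx h.symm) hpod
        · intro a ha
          rcases mem_insert.mp ha with rfl | ha'
          · exact hx
          · rcases mem_insert.mp ha' with rfl | ha''
            · exact hYW
            · exact (erase_subset x W) (hsub ha'')
      have keyA : ∀ f ∈ W.powersetCard (r'+2), x ∈ f →
          (l₁.map (fun t => t.2.2 * t.2.1 f)).sum = c f := by
        intro f hf hxf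
        obtain ⟨hfW, hfc⟩ := mem_powersetCard.mp hf
        rw [hl₁, List.map_map]
        have e1 : ∀ t ∈ l', ((fun t => t.2.2 * t.2.1 f) ∘ mk) t
            = t.2.2 * t.2.1 (f.erase x) := by
          intro t ht
          obtain ⟨hpod, hsub⟩ := hl'pod t ht
          obtain ⟨_, _, _, hYx, _, hxs⟩ := hl₁fact t ht
          simp only [hmk, Function.comp_apply]
          rw [if_pos hxf]
          have h2 : (if Y t.1 ∈ f then t.2.1 (f.erase (Y t.1)) else 0) = 0 := by
            by_cases hYf : Y t.1 ∈ f
            · rw [if_pos hYf]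
              apply hpod.supp
              intro hss
              exact hxs (hss (mem_erase.mpr ⟨fun h => hYx h.symm, hxf⟩))
            · rw [if_neg hYf]
          rw [h2, sub_zero]
        rw [List.map_congr_left e1]
        have hfe : f.erase x ∈ (W.erase x).powersetCard (r'+1) := mem_powersetCard.mpr
          ⟨erase_subset_erase x hfW, by rw [card_erase_of_mem hxf, hfc]; omega⟩
        have := hl'sum (f.erase x) hfe
        rw [hd] at this
        dsimp only at this
        rw [insert_erase hxf] at this
        exact this.symm
      set c₁ : Finset ℕ → ℤ := fun f => c f - (l₁.map (fun t => t.2.2 * t.2.1 f)).sum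
        with hc₁
      have keyB : ∀ S ∈ W.powersetCard (r'+1), dsum (r'+2) W S c₁ = 0 := by
        intro S hS
        obtain ⟨hSW, hSc⟩ := mem_powersetCard.mp hS
        unfold dsum
        rw [hc₁]
        dsimp only
        rw [Finset.sum_sub_distrib]
        have e0 : (∑ f ∈ (W.powersetCard (r'+2)).filter (fun f => S ⊆ f), c f) = 0 :=
          hnull S (by simpa using hS)
        have e1 : (∑ f ∈ (W.powersetCard (r'+2)).filter (fun f => S ⊆ f),
            (l₁.map (fun t => t.2.2 * t.2.1 f)).sum) = 0 := by
          rw [sum_list_swap]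
          apply List.sum_eq_zero
          intro z hz
          rw [List.mem_map] at hz
          obtain ⟨t, ht, rfl⟩ := hz
          rw [hl₁, List.mem_map] at ht
          obtain ⟨t', ht', rfl⟩ := ht
          obtain ⟨hpod, hsub, _⟩ := hl₁fact t' ht'
          have : (∑ f ∈ (W.powersetCard (r'+2)).filter (fun f => S ⊆ f), (mk t').2.1 f)
              = 0 := hpod.null W S hsub hSW (by omega)
          rw [← Finset.mul_sum, this, mul_zero]
        rw [e0, e1, sub_zero]
      have hc₁x : ∀ f ∈ W.powersetCard (r'+2), x ∈ f → c₁ f = 0 := by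
        intro f hf hxf
        rw [hc₁]
        dsimp only
        rw [keyA f hf hxf, sub_self]
      have hc₁null : ∀ S ∈ (W.erase x).powersetCard (r'+2-1),
          dsum (r'+2) (W.erase x) S c₁ = 0 := by
        intro S hS
        obtain ⟨hSW, hSc⟩ := mem_powersetCard.mp hS
        have hSWW : S ∈ W.powersetCard (r'+1) := mem_powersetCard.mpr
          ⟨hSW.trans (erase_subset x W), by omega⟩
        have big := keyB S hSWW
        unfold dsum at big ⊢
        rw [← Finset.sum_filter_add_sum_filter_not
          ((W.powersetCard (r'+2)).filter (fun f => S ⊆ f)) (fun f => x ∈ f) c₁] at big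
        have ez : (∑ f ∈ ((W.powersetCard (r'+2)).filter (fun f => S ⊆ f)).filter
            (fun f => x ∈ f), c₁ f) = 0 := by
          apply Finset.sum_eq_zero
          intro f hf
          obtain ⟨hf1, hf2⟩ := mem_filter.mp hf
          exact hc₁x f (mem_filter.mp hf1).1 hf2
        rw [ez, zero_add, filter_erase_eq] at big
        exact big
      obtain ⟨l'', hl''pod, hl''sum⟩ := ihn (W.erase x).card
        (by rw [card_erase_of_mem hx]; omega) (W.erase x) rfl (r'+2) (by omega) c₁ hc₁null
      refine ⟨l₁ ++ l'', ?_, ?_⟩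
      · intro t ht
        rcases List.mem_append.mp ht with h | h
        · rw [hl₁, List.mem_map] at h
          obtain ⟨t', ht', rfl⟩ := h
          obtain ⟨hpod, hsub, _⟩ := hl₁fact t' ht'
          exact ⟨hpod, hsub⟩
        · obtain ⟨hpod, hsub⟩ := hl''pod t h
          exact ⟨hpod, hsub.trans (erase_subset x W)⟩
      · intro f hf
        obtain ⟨hfW, hfc⟩ := mem_powersetCard.mp hf
        rw [List.map_append, List.sum_append]
        by_cases hxf : x ∈ f
        · rw [keyA f hf hxf]
          have ez : (l''.map (fun t => t.2.2 * t.2.1 f)).sum = 0 := by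
            apply List.sum_eq_zero
            intro z hz
            rw [List.mem_map] at hz
            obtain ⟨t, ht, rfl⟩ := hz
            obtain ⟨hpod, hsub⟩ := hl''pod t ht
            rw [hpod.supp f (fun hss => (mem_erase.mp (hsub (hss hxf))).1 rfl), mul_zero]
          rw [ez, add_zero]
        · have hfe : f ∈ (W.erase x).powersetCard (r'+2) := mem_powersetCard.mpr
            ⟨subset_erase.mpr ⟨hfW, hxf⟩, hfc⟩
          have := hl''sum f hfe
          rw [hc₁] at this
          dsimp only at this
          linarith

/-- `c` agrees on `r`-subsets of `W` with an integral combination of `q`-cliques. -/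
def Expr (q r : ℕ) (W : Finset ℕ) (c : Finset ℕ → ℤ) : Prop :=
  ∃ w : Finset ℕ → ℤ, ∀ f ∈ W.powersetCard r,
    (∑ Q ∈ (W.powersetCard q).filter (fun Q => f ⊆ Q), w Q) = c f

lemma Expr.congr {q r : ℕ} {W : Finset ℕ} {c c' : Finset ℕ → ℤ} (h : Expr q r W c)
    (he : ∀ f ∈ W.powersetCard r, c f = c' f) : Expr q r W c' := by
  obtain ⟨w, hw⟩ := h
  exact ⟨w, fun f hf => (hw f hf).trans (he f hf)⟩

lemma Expr.add {q r : ℕ} {W : Finset ℕ} {c c' : Finset ℕ → ℤ} (h : Expr q r W c)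
    (h' : Expr q r W c') : Expr q r W (fun f => c f + c' f) := by
  obtain ⟨w, hw⟩ := h
  obtain ⟨w', hw'⟩ := h'
  exact ⟨fun Q => w Q + w' Q, fun f hf => by
    rw [Finset.sum_add_distrib, hw f hf, hw' f hf]⟩

lemma Expr.smul {q r : ℕ} {W : Finset ℕ} {c : Finset ℕ → ℤ} (z : ℤ) (h : Expr q r W c) :
    Expr q r W (fun f => z * c f) := by
  obtain ⟨w, hw⟩ := h
  exact ⟨fun Q => z * w Q, fun f hf => by rw [← Finset.mul_sum, hw f hf]⟩

lemma Expr.listsum {q r : ℕ} {W : Finset ℕ} {α : Type*} (l : List α)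
    (g : α → Finset ℕ → ℤ) (h : ∀ t ∈ l, Expr q r W (g t)) :
    Expr q r W (fun f => (l.map (fun t => g t f)).sum) := by
  induction l with
  | nil => exact ⟨fun _ => 0, by simp⟩
  | cons a l ih =>
    have ha := h a List.mem_cons_self
    have hl := ih (fun t ht => h t (List.mem_cons_of_mem a ht))
    simpa using ha.add hl

lemma pod_clique {r : ℕ} {s : Finset ℕ} {P : Finset ℕ → ℤ} (h : Pod r s P) :
    ∀ (q : ℕ) (W : Finset ℕ), r < q → s ⊆ W → q + r ≤ W.card → Expr q r W P := by
  induction h with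
  | zero =>
    intro q W hq hsW hcard
    obtain ⟨T, hT⟩ := powersetCard_nonempty.mpr (show q ≤ W.card by omega)
    refine ⟨fun Q => if Q = T then 1 else 0, ?_⟩
    intro f hf
    have hf0 : f = ∅ := card_eq_zero.mp (mem_powersetCard.mp hf).2
    subst hf0
    rw [Finset.sum_ite_eq' _ T, if_pos (mem_filter.mpr ⟨hT, empty_subset T⟩)]
    simp
  | @succ r' s' P' x y hxs hys hxy h ih =>
    intro q W hq hsW hcard
    have hxW : x ∈ W := hsW (mem_insert_self _ _)
    have hyW : y ∈ W := hsW (mem_insert_of_mem (mem_insert_self _ _))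
    have hs'W : s' ⊆ (W.erase x).erase y := by
      intro a ha
      refine mem_erase.mpr ⟨fun h' => hys (h' ▸ ha), mem_erase.mpr
        ⟨fun h' => hxs (h' ▸ ha), hsW (mem_insert_of_mem (mem_insert_of_mem ha))⟩⟩
    have hcard' : (q-1) + r' ≤ ((W.erase x).erase y).card := by
      rw [card_erase_of_mem (mem_erase.mpr ⟨fun h' => hxy h'.symm, hyW⟩),
        card_erase_of_mem hxW]
      omega
    obtain ⟨w', hw'⟩ := ih (q-1) ((W.erase x).erase y) (by omega) hs'W hcard'
    -- the lifted weight function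
    refine ⟨fun Q => (if x ∈ Q ∧ y ∉ Q then w' (Q.erase x) else 0)
      - (if y ∈ Q ∧ x ∉ Q then w' (Q.erase y) else 0), ?_⟩
    intro f hf
    obtain ⟨hfW, hfc⟩ := mem_powersetCard.mp hf
    rw [Finset.sum_sub_distrib]
    have key : ∀ a b : ℕ, a ≠ b → a ∈ W →
        ((W.erase a).erase b) = ((W.erase x).erase y) → b ∉ f →
        (∑ Q ∈ (W.powersetCard q).filter (fun Q => f ⊆ Q),
            (if a ∈ Q ∧ b ∉ Q then w' (Q.erase a) else 0))
          = ∑ T ∈ (((W.erase x).erase y).powersetCard (q-1)).filter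
              (fun T => f.erase a ⊆ T), w' T := by
      intro a b hab haW hWab hbf
      rw [← sum_filter]
      apply Finset.sum_nbij' (fun Q => Q.erase a) (fun T => insert a T)
      · intro Q hQ
        simp only [mem_filter, mem_powersetCard] at hQ
        obtain ⟨⟨⟨hQW, hQc⟩, hfQ⟩, haQ, hbQ⟩ := hQ
        rw [← hWab]
        simp only [mem_filter, mem_powersetCard]
        refine ⟨⟨?_, by rw [card_erase_of_mem haQ, hQc]⟩, erase_subset_erase a hfQ⟩
        intro u hu
        obtain ⟨hua, huQ⟩ := mem_erase.mp hu
        exact mem_erase.mpr ⟨fun h' => hbQ (h' ▸ huQ), mem_erase.mpr ⟨hua, hQW huQ⟩⟩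
      · intro T hT
        rw [← hWab] at hT
        simp only [mem_filter, mem_powersetCard] at hT
        obtain ⟨⟨hTW, hTc⟩, hfT⟩ := hT
        have haT : a ∉ T := fun h' => (mem_erase.mp (mem_erase.mp (hTW h')).2).1 rfl
        have hbT : b ∉ T := fun h' => (mem_erase.mp (hTW h')).1 rfl
        simp only [mem_filter, mem_powersetCard]
        refine ⟨⟨⟨insert_subset haW (fun u hu =>
          (erase_subset a W) ((erase_subset b (W.erase a)) (hTW hu))), ?_⟩, ?_⟩,
          mem_insert_self a T, ?_⟩
        · rw [card_insert_of_notMem haT, hTc]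
          omega
        · intro u hu
          by_cases hua : u = a
          · exact hua ▸ mem_insert_self a T
          · exact mem_insert_of_mem (hfT (mem_erase.mpr ⟨hua, hu⟩))
        · intro hb
          rcases mem_insert.mp hb with h' | h'
          · exact hab h'.symm
          · exact hbT h'
      · intro Q hQ
        simp only [mem_filter] at hQ
        exact insert_erase hQ.2.1
      · intro T hT
        rw [← hWab] at hT
        simp only [mem_filter, mem_powersetCard] at hT
        exact erase_insert (fun h' => (mem_erase.mp (mem_erase.mp (hT.1.1 h')).2).1 rfl)
      · intro Q _
        rfl
    have hWyx : ((W.erase y).erase x) = ((W.erase x).erase y) := by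
      ext a
      simp only [mem_erase]
      tauto
    dsimp only
    by_cases hxf : x ∈ f <;> by_cases hyf : y ∈ f
    · -- both: everything vanishes
      have e1 : (∑ Q ∈ (W.powersetCard q).filter (fun Q => f ⊆ Q),
          (if x ∈ Q ∧ y ∉ Q then w' (Q.erase x) else 0)) = 0 := by
        apply Finset.sum_eq_zero
        intro Q hQ
        exact if_neg (fun hc => hc.2 ((mem_filter.mp hQ).2 hyf))
      have e2 : (∑ Q ∈ (W.powersetCard q).filter (fun Q => f ⊆ Q),
          (if y ∈ Q ∧ x ∉ Q then w' (Q.erase y) else 0)) = 0 := by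
        apply Finset.sum_eq_zero
        intro Q hQ
        exact if_neg (fun hc => hc.2 ((mem_filter.mp hQ).2 hxf))
      rw [e1, e2, if_pos hxf, if_pos hyf,
        h.supp (f.erase x) (fun hss => hys (hss (mem_erase.mpr ⟨fun h' => hxy h'.symm, hyf⟩))),
        h.supp (f.erase y) (fun hss => hxs (hss (mem_erase.mpr ⟨hxy, hxf⟩)))]
    · -- x ∈ f, y ∉ f
      have hmemx : f.erase x ∈ ((W.erase x).erase y).powersetCard r' := by
        refine mem_powersetCard.mpr ⟨?_, by rw [card_erase_of_mem hxf, hfc]; omega⟩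
        intro u hu
        obtain ⟨hux, huf⟩ := mem_erase.mp hu
        exact mem_erase.mpr ⟨fun h' => hyf (h' ▸ huf), mem_erase.mpr ⟨hux, hfW huf⟩⟩
      have e2 : (∑ Q ∈ (W.powersetCard q).filter (fun Q => f ⊆ Q),
          (if y ∈ Q ∧ x ∉ Q then w' (Q.erase y) else 0)) = 0 := by
        apply Finset.sum_eq_zero
        intro Q hQ
        exact if_neg (fun hc => hc.2 ((mem_filter.mp hQ).2 hxf))
      rw [e2, sub_zero, key x y hxy hxW rfl hyf, hw' (f.erase x) hmemx,
        if_pos hxf, if_neg hyf, sub_zero]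
    · -- y ∈ f, x ∉ f
      have hmemy : f.erase y ∈ ((W.erase x).erase y).powersetCard r' := by
        refine mem_powersetCard.mpr ⟨?_, by rw [card_erase_of_mem hyf, hfc]; omega⟩
        intro u hu
        obtain ⟨huy, huf⟩ := mem_erase.mp hu
        exact mem_erase.mpr ⟨huy, mem_erase.mpr ⟨fun h' => hxf (h' ▸ huf), hfW huf⟩⟩
      have e1 : (∑ Q ∈ (W.powersetCard q).filter (fun Q => f ⊆ Q),
          (if x ∈ Q ∧ y ∉ Q then w' (Q.erase x) else 0)) = 0 := by
        apply Finset.sum_eq_zero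
        intro Q hQ
        exact if_neg (fun hc => hc.2 ((mem_filter.mp hQ).2 hyf))
      rw [e1, zero_sub, key y x (Ne.symm hxy) hyW hWyx hxf, hw' (f.erase y) hmemy,
        if_neg hxf, if_pos hyf, zero_sub]
    · -- neither
      rw [key x y hxy hxW rfl hyf, key y x (Ne.symm hxy) hyW hWyx hxf,
        erase_eq_of_notMem hxf, erase_eq_of_notMem hyf, if_neg hxf, if_neg hyf]
      simp

lemma main_expr : ∀ (r q : ℕ), r < q → ∀ (W : Finset ℕ), q + r ≤ W.card →
    ∀ c : Finset ℕ → ℤ,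
    (∀ S : Finset ℕ, S ⊆ W → S.card < r →
      (((q - S.card).choose (r - S.card) : ℕ) : ℤ) ∣ dsum r W S c) →
    Expr q r W c := by
  intro r
  induction r with
  | zero =>
    intro q hq W hW c _
    obtain ⟨T, hT⟩ := powersetCard_nonempty.mpr (show q ≤ W.card by omega)
    refine ⟨fun Q => if Q = T then c ∅ else 0, ?_⟩
    intro f hf
    have hf0 : f = ∅ := card_eq_zero.mp (mem_powersetCard.mp hf).2
    subst hf0
    rw [Finset.sum_ite_eq' _ T, if_pos (mem_filter.mpr ⟨hT, empty_subset T⟩)]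
  | succ r ih =>
    intro q hq W hW c hdiv
    have hrq : r + 1 < q := hq
    have hdvd1 : ∀ S ∈ W.powersetCard r, ((q:ℤ) - r) ∣ dsum (r+1) W S c := by
      intro S hS
      obtain ⟨hSW, hSc⟩ := mem_powersetCard.mp hS
      have hthis := hdiv S hSW (by omega)
      rw [hSc, show r + 1 - r = 1 from by omega, Nat.choose_one_right,
        Nat.cast_sub (by omega : r ≤ q)] at hthis
      exact hthis
    set d : Finset ℕ → ℤ := fun S => dsum (r+1) W S c / ((q:ℤ) - r) with hd
    have hdk : ∀ S ∈ W.powersetCard r, ((q:ℤ) - r) * d S = dsum (r+1) W S c := by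
      intro S hS
      rw [hd]
      exact Int.mul_ediv_cancel' (hdvd1 S hS)
    have hddiv : ∀ S : Finset ℕ, S ⊆ W → S.card < r →
        (((q - S.card).choose (r - S.card) : ℕ) : ℤ) ∣ dsum r W S d := by
      intro S hSW hSr
      obtain ⟨m, hm⟩ := hdiv S hSW (by omega)
      have hlvl := sum_level (W := W) (S := S) rfl (le_of_lt hSr) (Nat.le_succ r) c
      have hlhs : (∑ S' ∈ (W.powersetCard r).filter (fun S' => S ⊆ S'), dsum (r+1) W S' c)
          = ((q:ℤ) - r) * dsum r W S d := by
        rw [show dsum r W S d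
          = ∑ S' ∈ (W.powersetCard r).filter (fun S' => S ⊆ S'), d S' from rfl,
          Finset.mul_sum]
        exact Finset.sum_congr rfl (fun S' hS' => (hdk S' (mem_filter.mp hS').1).symm)
      have hnat : ((r+1-S.card).choose (r-S.card)) * ((q-S.card).choose (r+1-S.card))
          = (q - r) * ((q-S.card).choose (r-S.card)) := by
        have h1 : (r+1-S.card).choose (r-S.card) = r+1-S.card := by
          rw [show r - S.card = (r+1-S.card) - 1 from by omega,
            Nat.choose_symm (by omega), Nat.choose_one_right]
        have h2 := Nat.choose_succ_right_eq (q-S.card) (r-S.card)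
        rw [show (r-S.card)+1 = r+1-S.card from by omega,
          show (q-S.card)-(r-S.card) = q-r from by omega] at h2
        rw [h1, mul_comm (r+1-S.card) _, h2, mul_comm]
      have hz : ((q:ℤ) - r) ≠ 0 := by omega
      refine ⟨m, ?_⟩
      apply mul_left_cancel₀ hz
      rw [← hlhs, hlvl, hm]
      have hcast := congrArg (fun n : ℕ => (n : ℤ)) hnat
      push_cast at hcast
      rw [Nat.cast_sub (by omega : r ≤ q)] at hcast
      linear_combination m * hcast
    obtain ⟨w', hw'⟩ := ih q (by omega) W (by omega) d hddiv
    set g : Finset ℕ → ℤ := fun f =>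
      ∑ Q ∈ (W.powersetCard q).filter (fun Q => f ⊆ Q), w' Q with hg
    have hnull2 : ∀ S ∈ W.powersetCard ((r+1)-1),
        dsum (r+1) W S (fun f => c f - g f) = 0 := by
      intro S hS
      have hSr : S ∈ W.powersetCard r := hS
      obtain ⟨hSW, hSc⟩ := mem_powersetCard.mp hSr
      have hgsum : dsum (r+1) W S g
          = ((q:ℤ) - r) * ∑ Q ∈ (W.powersetCard q).filter (fun Q => S ⊆ Q), w' Q := by
        unfold dsum
        rw [hg]
        dsimp only
        rw [sum_filter]
        have e1 : ∀ f ∈ W.powersetCard (r+1),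
            (if S ⊆ f then ∑ Q ∈ (W.powersetCard q).filter (fun Q => f ⊆ Q), w' Q else 0)
              = ∑ Q ∈ W.powersetCard q, (if S ⊆ f ∧ f ⊆ Q then w' Q else 0) := by
          intro f _
          by_cases hSf : S ⊆ f
          · simp only [hSf, if_true, true_and, sum_filter]
          · simp [hSf]
        rw [Finset.sum_congr rfl e1, Finset.sum_comm]
        have e2 : ∀ Q ∈ W.powersetCard q,
            (∑ f ∈ W.powersetCard (r+1), if S ⊆ f ∧ f ⊆ Q then w' Q else 0)
              = (if S ⊆ Q then ((q:ℤ) - r) else 0) * w' Q := by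
          intro Q hQ
          obtain ⟨hQW, hQc⟩ := mem_powersetCard.mp hQ
          rw [← sum_filter, sum_const, nsmul_eq_mul]
          have hset : (W.powersetCard (r+1)).filter (fun f => S ⊆ f ∧ f ⊆ Q)
              = (Q.powersetCard (r+1)).filter (fun f => S ⊆ f) := by
            ext f
            simp only [mem_filter, mem_powersetCard]
            constructor
            · rintro ⟨⟨_, hc⟩, h1, h2⟩; exact ⟨⟨h2, hc⟩, h1⟩
            · rintro ⟨⟨h2, hc⟩, h1⟩; exact ⟨⟨h2.trans hQW, hc⟩, h1, h2⟩
          rw [hset]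
          by_cases hSQ : S ⊆ Q
          · rw [card_between_core hSQ (by omega), hQc, hSc, if_pos hSQ,
              show r + 1 - r = 1 from by omega, Nat.choose_one_right,
              Nat.cast_sub (by omega : r ≤ q)]
          · rw [card_between_zero (by tauto), if_neg hSQ]
            simp
        rw [Finset.sum_congr rfl e2, Finset.mul_sum, sum_filter]
        apply Finset.sum_congr rfl
        intro Q _
        by_cases hSQ : S ⊆ Q <;> simp [hSQ]
      have hsub : dsum (r+1) W S (fun f => c f - g f)
          = dsum (r+1) W S c - dsum (r+1) W S g := Finset.sum_sub_distrib _ _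
      rw [hsub, hgsum, hw' S hSr, hdk S hSr, sub_self]
    obtain ⟨lp, hlppod, hlpsum⟩ := podgen W.card W rfl (r+1) (by omega)
      (fun f => c f - g f) hnull2
    have hexpr : Expr q (r+1) W (fun f => (lp.map (fun t => t.2.2 * t.2.1 f)).sum) := by
      apply Expr.listsum lp (fun t f => t.2.2 * t.2.1 f)
      intro t ht
      exact Expr.smul _ (pod_clique (hlppod t ht).1 q W (by omega) (hlppod t ht).2 (by omega))
    have hgexpr : Expr q (r+1) W g := ⟨w', fun f hf => rfl⟩
    refine (hexpr.add hgexpr).congr ?_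
    intro f hf
    rw [← hlpsum f hf]
    ring

/-- **Graver–Jurkat / Wilson: existence of integral `K_q^r`-decompositions.**
Let `q > r ≥ 1` and let `L` be a `K_q^r`-divisible `r`-graph on a vertex set `W` with
`|W| ≥ q + r`.  Then there is an assignment of integers `w Q` to the `q`-subsets `Q` of
`W` such that for every `r`-subset `f` of `W`, the sum of `w Q` over all `q`-subsets `Q`
containing `f` equals `1` if `f` is an edge of `L` and `0` otherwise. -/
theorem integral_decomposition_exists {q r : ℕ} (hr : 1 ≤ r) (hq : r < q)
    (W : Finset ℕ) (hW : q + r ≤ W.card)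
    (L : Finset (Finset ℕ)) (hL : IsRGraph r L) (hLW : ∀ e ∈ L, e ⊆ W)
    (hdiv : Divisible q r L) :
    ∃ w : Finset ℕ → ℤ,
      ∀ f ∈ W.powersetCard r,
        (∑ Q ∈ (W.powersetCard q).filter (fun Q => f ⊆ Q), w Q)
          = if f ∈ L then 1 else 0 := by
  classical
  have hc : ∀ S : Finset ℕ, S ⊆ W → S.card < r →
      (((q - S.card).choose (r - S.card) : ℕ) : ℤ) ∣
        dsum r W S (fun f => if f ∈ L then 1 else 0) := by
    intro S hSW hSr
    have hnat := hdiv S hSr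
    have he : dsum r W S (fun f => if f ∈ L then (1:ℤ) else 0)
        = ((L.filter (fun e => S ⊆ e)).card : ℤ) := by
      unfold dsum
      rw [Finset.sum_boole]
      congr 1
      have hsets : ((W.powersetCard r).filter (fun f => S ⊆ f)).filter (fun f => f ∈ L)
          = L.filter (fun e => S ⊆ e) := by
        ext f
        simp only [Finset.mem_filter, Finset.mem_powersetCard]
        constructor
        · rintro ⟨⟨_, hSf⟩, hfL⟩
          exact ⟨hfL, hSf⟩
        · rintro ⟨hfL, hSf⟩
          exact ⟨⟨⟨hLW f hfL, hL f hfL⟩, hSf⟩, hfL⟩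
      rw [hsets]
    rw [he]
    exact_mod_cast hnat
  obtain ⟨w, hw⟩ := main_expr r q hq W hW (fun f => if f ∈ L then 1 else 0) hc
  exact ⟨w, hw⟩
end
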